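/- arXiv:math/0505258 — 2 statements merged into one kernel-verified Lean document; each statement's English description precedes it below -/
import Mathlib

section
/- Let (A₀, τ_t, φ₀) be a quantum dynamical semigroup with normal invariant state φ₀ and let p be a sub-harmonic projection for (τ_t) (i.e. τ_t(p) ≥ p for all t ≥ 0) such that τ_t(p) → 1 strongly as t → ∞. Then the following are equivalent: (a) ||φ ∘ τ_t − φ₀|| → 0 as t → ∞ for every normal state φ on A₀; (b) ||φᵖ ∘ τᵖ_t − φᵖ₀|| → 0 as t → ∞ for every normal state φᵖ on Aᵖ₀, where Aᵖ₀ = pA₀p, τᵖ_t(x) = pτ_t(pxp)p, and φᵖ₀(x) = φ₀(pxp). -/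
noncomputable section
open Filter Topology
open scoped ComplexOrder

namespace Paper

local notation "⟪" x ", " y "⟫" => @inner ℂ _ _ x y

variable {H : Type u} [NormedAddCommGroup H] [InnerProductSpace ℂ H] [CompleteSpace H]

abbrev Op (H : Type u) [NormedAddCommGroup H] [InnerProductSpace ℂ H] [CompleteSpace H] :=
  H →L[ℂ] H

structure NormalState (H : Type u) [NormedAddCommGroup H] [InnerProductSpace ℂ H]
    [CompleteSpace H] where
  ξ : ℕ → H
  norm_sum : (∑' n, ‖ξ n‖ ^ 2) = 1

def NormalState.apply (ω : NormalState H) (x : Op H) : ℂ :=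
  ∑' n, ⟪ω.ξ n, x (ω.ξ n)⟫

def bicomm (S : Set (Op H)) : Set (Op H) := Set.centralizer (Set.centralizer S)
def IsVN (S : Set (Op H)) : Prop := (∀ x ∈ S, star x ∈ S) ∧ bicomm S = S
def IsProjection (e : Op H) : Prop := IsSelfAdjoint e ∧ IsIdempotentElem e
def opLE (a b : Op H) : Prop := ContinuousLinearMap.IsPositive (b - a)

def IsCPMap (S : Set (Op H)) (τ : Op H → Op H) : Prop :=
  ∀ (k : ℕ) (a : Fin k → Op H) (v : Fin k → H), (∀ i, a i ∈ S) →
    0 ≤ ∑ i, ∑ j, ⟪v i, τ (star (a i) * a j) (v j)⟫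

def IsNormalMap (S : Set (Op H)) (τ : Op H → Op H) : Prop :=
  ∀ ω : NormalState H, ∃ ω' : NormalState H, ∀ x ∈ S, ω.apply (τ x) = ω'.apply x

/-- A weak*-continuous semigroup of identity preserving completely positive normal maps
on a von Neumann algebra `S`, the time parameter running over `ℝ₊`. -/
structure MarkovSemigroup (S : Set (Op H)) where
  τ : ℝ → Op H → Op H
  maps : ∀ t, 0 ≤ t → ∀ x ∈ S, τ t x ∈ S
  linear : ∀ t, 0 ≤ t → IsLinearMap ℂ (τ t)
  unital : ∀ t, 0 ≤ t → τ t 1 = 1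
  id0 : ∀ x, τ 0 x = x
  comp : ∀ s t, 0 ≤ s → 0 ≤ t → ∀ x ∈ S, τ (s + t) x = τ s (τ t x)
  cp : ∀ t, 0 ≤ t → IsCPMap S (τ t)
  normal : ∀ t, 0 ≤ t → IsNormalMap S (τ t)
  weakCont : ∀ x ∈ S, ∀ ω : NormalState H, ContinuousOn (fun t => ω.apply (τ t x)) (Set.Ici 0)

/-- A single identity preserving completely positive normal map (discrete time). -/
structure MarkovMap (S : Set (Op H)) where
  τ : Op H → Op H
  maps : ∀ x ∈ S, τ x ∈ S
  linear : IsLinearMap ℂ τ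
  unital : τ 1 = 1
  cp : IsCPMap S τ
  normal : IsNormalMap S τ

def InvariantState {S : Set (Op H)} (T : MarkovSemigroup S) (φ : NormalState H) : Prop :=
  ∀ t, 0 ≤ t → ∀ x ∈ S, φ.apply (T.τ t x) = φ.apply x

def FaithfulOn (φ : NormalState H) (S : Set (Op H)) : Prop :=
  ∀ x ∈ S, φ.apply (star x * x) = 0 → x = 0

def ErgodicOn {S : Set (Op H)} (T : MarkovSemigroup S) (S' : Set (Op H)) : Prop :=
  ∀ x ∈ S', (∀ t, 0 ≤ t → T.τ t x = x) → ∃ c : ℂ, x = c • 1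

def MixingOn {S : Set (Op H)} (T : MarkovSemigroup S) (φ : NormalState H)
    (S' : Set (Op H)) : Prop :=
  ∀ x ∈ S', ∀ ω : NormalState H,
    Tendsto (fun t => ω.apply (T.τ t x)) atTop (𝓝 (φ.apply x))

/-- Tomita's modular automorphism group of a faithful normal state, characterized by the
KMS condition. -/
structure ModularGroup (S : Set (Op H)) (φ : NormalState H) where
  σ : ℝ → Op H → Op H
  maps : ∀ s, ∀ x ∈ S, σ s x ∈ S
  linear : ∀ s, IsLinearMap ℂ (σ s)
  mul : ∀ s, ∀ x ∈ S, ∀ y ∈ S, σ s (x * y) = σ s x * σ s y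
  star_map : ∀ s, ∀ x ∈ S, σ s (star x) = star (σ s x)
  zero : ∀ x, σ 0 x = x
  add : ∀ s t, ∀ x ∈ S, σ (s + t) x = σ s (σ t x)
  surj : ∀ s, ∀ x ∈ S, σ s (σ (-s) x) = x
  state : ∀ s, ∀ x ∈ S, φ.apply (σ s x) = φ.apply x
  kms : ∀ x ∈ S, ∀ y ∈ S, ∃ F : ℂ → ℂ,
    ContinuousOn F {z : ℂ | 0 ≤ z.im ∧ z.im ≤ 1} ∧
    DifferentiableOn ℂ F {z : ℂ | 0 < z.im ∧ z.im < 1} ∧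
    (∀ s : ℝ, F s = φ.apply (σ s x * y)) ∧
    (∀ s : ℝ, F (s + Complex.I) = φ.apply (y * σ s x))

/-- The adjoint (time reversed) Markov semigroup of `T` with respect to the faithful
normal invariant state `φ`. -/
structure AdjointSemigroup (S : Set (Op H)) (T : MarkovSemigroup S) (φ : NormalState H) where
  tilde : MarkovSemigroup S
  inv : ∀ t, 0 ≤ t → ∀ x ∈ S, φ.apply (tilde.τ t x) = φ.apply x
  adjoint_rel : ∀ t, 0 ≤ t → ∀ x ∈ S, ∀ y ∈ S,
    φ.apply (tilde.τ t x * y) = φ.apply (x * T.τ t y)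

def Gset {S : Set (Op H)} (T : MarkovSemigroup S) {φ : NormalState H}
    (A : AdjointSemigroup S T φ) : Set (Op H) :=
  {x | x ∈ S ∧ ∀ t, 0 ≤ t → A.tilde.τ t (T.τ t x) = x}

def GtildeSet {S : Set (Op H)} (T : MarkovSemigroup S) {φ : NormalState H}
    (A : AdjointSemigroup S T φ) : Set (Op H) :=
  {x | x ∈ S ∧ ∀ t, 0 ≤ t → T.τ t (A.tilde.τ t x) = x}

def G0set {S : Set (Op H)} (T : MarkovSemigroup S) {φ : NormalState H}
    (A : AdjointSemigroup S T φ) : Set (Op H) :=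
  ⋂ s ∈ Set.Ici (0 : ℝ), T.τ s '' Gset T A

/-!
For a normal state `ω`, strong convergence `τ_s p → 1` gives `c = ω (τ_s p) → 1`. The state
`ψ = ω ∘ τ_s` then differs from `c ψ'`, where `ψ'` is its normalized compression to `p`, by
`O(√(1 - c))` in norm (Cauchy-Schwarz). Subharmonicity forces `τ_r (1 - p)` to vanish on the range
of `p`, and the Cauchy-Schwarz inequality for the completely positive map `τ_r` then shows that
a state supported in `p` sees `τ_r x` only through `τ_r (p x p)`. Hence `ψ' (τ_r x)` is a value of
the reduced semigroup and tends to `φ (p x p) = φ x` by (b); the invariant state `φ` is itself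
supported in `p` because `φ p = φ (τ_t p) → 1`. The converse direction is restriction.
-/

namespace IsVN

variable {S : Set (Op H)}

lemma coe_centralizer_centralizer (hS : IsVN S) :
    (Subalgebra.centralizer ℂ (Set.centralizer S) : Set (Op H)) = S := by
  rw [Subalgebra.coe_centralizer]
  exact hS.2

lemma one_mem (hS : IsVN S) : (1 : Op H) ∈ S :=
  hS.coe_centralizer_centralizer ▸ Subalgebra.one_mem _

lemma mul_mem (hS : IsVN S) {x y : Op H} (hx : x ∈ S) (hy : y ∈ S) : x * y ∈ S := by
  rw [← hS.coe_centralizer_centralizer] at hx hy ⊢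
  exact Subalgebra.mul_mem _ hx hy

lemma sub_mem (hS : IsVN S) {x y : Op H} (hx : x ∈ S) (hy : y ∈ S) : x - y ∈ S := by
  rw [← hS.coe_centralizer_centralizer] at hx hy ⊢
  exact Subalgebra.sub_mem _ hx hy

end IsVN

namespace IsProjection

variable {p : Op H}

lemma isStarProjection (hp : IsProjection p) : IsStarProjection p := ⟨hp.2, hp.1⟩

lemma one_sub (hp : IsProjection p) : IsProjection (1 - p) :=
  ⟨hp.isStarProjection.one_sub.isSelfAdjoint, hp.isStarProjection.one_sub.isIdempotentElem⟩

lemma star_mul_self (hp : IsProjection p) : star p * p = p := by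
  rw [hp.1.star_eq, hp.2.eq]

lemma inner_map_left (hp : IsProjection p) (u v : H) : ⟪p u, v⟫ = ⟪u, p v⟫ :=
  hp.1.isSymmetric u v

lemma map_map (hp : IsProjection p) (v : H) : p (p v) = p v :=
  congrArg (· v) hp.2.eq

lemma norm_le_one (hp : IsProjection p) : ‖p‖ ≤ 1 :=
  IsStarProjection.norm_le p hp.isStarProjection

lemma norm_map_le (hp : IsProjection p) (v : H) : ‖p v‖ ≤ ‖v‖ :=
  (p.le_of_opNorm_le hp.norm_le_one v).trans_eq (one_mul _)

lemma norm_mul_mul_le (hp : IsProjection p) (z : Op H) : ‖p * z * p‖ ≤ ‖z‖ :=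
  calc ‖p * z * p‖ ≤ ‖p‖ * ‖z‖ * ‖p‖ := norm_mul₃_le
    _ ≤ 1 * ‖z‖ * 1 := by gcongr <;> exact hp.norm_le_one
    _ = ‖z‖ := by ring

lemma inner_map_self (hp : IsProjection p) (v : H) : ⟪v, p v⟫ = (‖p v‖ ^ 2 : ℝ) := by
  rw [← hp.inner_map_left, ← hp.map_map v, hp.inner_map_left, hp.map_map,
    inner_self_eq_norm_sq_to_K]
  simp

lemma inner_mul_mul (hp : IsProjection p) (z : Op H) (v : H) :
    ⟪v, (p * z * p) v⟫ = ⟪p v, z (p v)⟫ :=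
  (hp.inner_map_left _ _).symm

lemma norm_sub_map_sq (hp : IsProjection p) (v : H) :
    ‖v - p v‖ ^ 2 = ‖v‖ ^ 2 - ‖p v‖ ^ 2 := by
  have horth : ⟪p v, v - p v⟫ = 0 := by
    rw [inner_sub_right, hp.inner_map_left, hp.inner_map_left, hp.map_map, sub_self]
  have h := norm_add_sq_eq_norm_sq_add_norm_sq_of_inner_eq_zero (p v) (v - p v) horth
  rw [add_sub_cancel] at h
  linarith

end IsProjection

lemma summable_and_tsum_mul_le_sqrt_mul_sqrt {f g : ℕ → ℝ} (hf : ∀ i, 0 ≤ f i)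
    (hg : ∀ i, 0 ≤ g i) (hf2 : Summable fun i => f i ^ 2) (hg2 : Summable fun i => g i ^ 2) :
    (Summable fun i => f i * g i) ∧ ∑' i, f i * g i ≤ √(∑' i, f i ^ 2) * √(∑' i, g i ^ 2) := by
  have key := Real.summable_and_inner_le_Lp_mul_Lq_tsum_of_nonneg Real.HolderConjugate.two_two
    hf hg (by simpa only [Real.rpow_two] using hf2) (by simpa only [Real.rpow_two] using hg2)
  simpa only [Real.rpow_two, Real.sqrt_eq_rpow, one_div] using key

namespace NormalState

variable (ω : NormalState H) {p : Op H}

lemma hasSum_norm_sq : HasSum (fun n => ‖ω.ξ n‖ ^ 2) 1 := by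
  refine ω.norm_sum ▸ (Summable.hasSum ?_)
  by_contra h
  simpa [tsum_eq_zero_of_not_summable h] using ω.norm_sum

lemma summable_norm_sq : Summable fun n => ‖ω.ξ n‖ ^ 2 := ω.hasSum_norm_sq.summable

lemma norm_inner_le (x : Op H) (n : ℕ) : ‖⟪ω.ξ n, x (ω.ξ n)⟫‖ ≤ ‖x‖ * ‖ω.ξ n‖ ^ 2 :=
  calc ‖⟪ω.ξ n, x (ω.ξ n)⟫‖ ≤ ‖ω.ξ n‖ * (‖x‖ * ‖ω.ξ n‖) :=
        (norm_inner_le_norm _ _).trans (by gcongr; exact x.le_opNorm _)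
    _ = ‖x‖ * ‖ω.ξ n‖ ^ 2 := by ring

lemma norm_apply_le (x : Op H) : ‖ω.apply x‖ ≤ ‖x‖ :=
  (tsum_of_norm_bounded (ω.hasSum_norm_sq.mul_left ‖x‖) (ω.norm_inner_le x)).trans_eq (mul_one _)

lemma hasSum_apply (x : Op H) : HasSum (fun n => ⟪ω.ξ n, x (ω.ξ n)⟫) (ω.apply x) :=
  (Summable.of_norm_bounded (ω.summable_norm_sq.mul_left ‖x‖) (ω.norm_inner_le x)).hasSum

lemma apply_one : ω.apply 1 = 1 := by
  simp only [apply, one_apply_eq_self, inner_self_eq_norm_sq_to_K]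
  simpa [Complex.ofReal_tsum] using congrArg Complex.ofReal ω.norm_sum

lemma hasSum_norm_map_sq (hp : IsProjection p) :
    HasSum (fun n => ‖p (ω.ξ n)‖ ^ 2) (ω.apply p).re := by
  convert Complex.hasSum_re (ω.hasSum_apply p) using 2 with n
  rw [hp.inner_map_self, Complex.ofReal_re]

lemma hasSum_norm_sub_map_sq (hp : IsProjection p) :
    HasSum (fun n => ‖ω.ξ n - p (ω.ξ n)‖ ^ 2) (1 - (ω.apply p).re) := by
  simpa only [hp.norm_sub_map_sq] using ω.hasSum_norm_sq.sub (ω.hasSum_norm_map_sq hp)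

lemma tendsto_apply {ι : Type*} {l : Filter ι} {A : ι → Op H} {B : Op H} {M : ℝ}
    (hA : ∀ v, Tendsto (fun i => A i v) l (𝓝 (B v))) (hM : ∀ᶠ i in l, ‖A i‖ ≤ M) :
    Tendsto (fun i => ω.apply (A i)) l (𝓝 (ω.apply B)) :=
  tendsto_tsum_of_dominated_convergence (ω.summable_norm_sq.mul_left M)
    (fun n => tendsto_const_nhds.inner (hA (ω.ξ n)))
    (hM.mono fun _ hi n => (ω.norm_inner_le _ n).trans (by gcongr))

/-- Cauchy-Schwarz in `ℓ²`: the cross terms between `ξₙ - p ξₙ` and `ξₙ` cost at most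
`√(∑ ‖ξₙ - p ξₙ‖²) = √(1 - ω p)`. -/
lemma norm_apply_sub_apply_mul_mul_le (hp : IsProjection p) (y : Op H) :
    ‖ω.apply y - ω.apply (p * y * p)‖ ≤ 2 * ‖y‖ * √(1 - (ω.apply p).re) := by
  have hout := ω.hasSum_norm_sub_map_sq hp
  obtain ⟨hsum, hcs⟩ := summable_and_tsum_mul_le_sqrt_mul_sqrt (fun n => norm_nonneg _)
    (fun n => norm_nonneg _) hout.summable ω.summable_norm_sq
  rw [hout.tsum_eq, ω.hasSum_norm_sq.tsum_eq, Real.sqrt_one, mul_one] at hcs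
  have hterm : ∀ n, ‖⟪ω.ξ n, y (ω.ξ n)⟫ - ⟪ω.ξ n, (p * y * p) (ω.ξ n)⟫‖
      ≤ 2 * ‖y‖ * (‖ω.ξ n - p (ω.ξ n)‖ * ‖ω.ξ n‖) := by
    intro n
    set v := ω.ξ n
    have hsplit : ⟪v, y v⟫ - ⟪v, (p * y * p) v⟫ = ⟪v - p v, y v⟫ + ⟪p v, y (v - p v)⟫ := by
      rw [hp.inner_mul_mul, inner_sub_left, map_sub, inner_sub_right]
      ring
    rw [hsplit]
    refine (norm_add_le _ _).trans ?_
    have h1 := (norm_inner_le_norm (𝕜 := ℂ) (v - p v) (y v)).trans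
      (mul_le_mul_of_nonneg_left (y.le_opNorm v) (norm_nonneg _))
    have h2 := (norm_inner_le_norm (𝕜 := ℂ) (p v) (y (v - p v))).trans
      (mul_le_mul (hp.norm_map_le v) (y.le_opNorm _) (norm_nonneg _) (norm_nonneg _))
    linarith
  calc ‖ω.apply y - ω.apply (p * y * p)‖
      ≤ ∑' n, 2 * ‖y‖ * (‖ω.ξ n - p (ω.ξ n)‖ * ‖ω.ξ n‖) :=
        ((ω.hasSum_apply y).sub (ω.hasSum_apply _)).norm_le_of_bounded
          (hsum.mul_left _).hasSum hterm
    _ ≤ 2 * ‖y‖ * √(1 - (ω.apply p).re) := by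
        rw [tsum_mul_left]
        gcongr

def SupportedIn (p : Op H) : Prop := ∀ n, p (ω.ξ n) = ω.ξ n

variable {ω}

lemma SupportedIn.apply_mul_mul (h : ω.SupportedIn p) (hp : IsProjection p) (z : Op H) :
    ω.apply (p * z * p) = ω.apply z :=
  tsum_congr fun n => by rw [hp.inner_mul_mul, h n]

lemma supportedIn_of_apply_eq_one (hp : IsProjection p) (h : (ω.apply p).re = 1) :
    ω.SupportedIn p := by
  have hout := ω.hasSum_norm_sub_map_sq hp
  rw [h, sub_self, hasSum_zero_iff_of_nonneg fun n => sq_nonneg _] at hout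
  intro n
  have h0 : ‖ω.ξ n - p (ω.ξ n)‖ ^ 2 = 0 := congrFun hout n
  rw [sq_eq_zero_iff, norm_eq_zero, sub_eq_zero] at h0
  exact h0.symm

variable (ω)

/-- The normalized compression `x ↦ ω (p x p) / ω p`, a normal state of `p A p`. -/
def compress (hp : IsProjection p) (hc : 0 < (ω.apply p).re) : NormalState H where
  ξ n := ((√(ω.apply p).re)⁻¹ : ℂ) • p (ω.ξ n)
  norm_sum := by
    simp only [norm_smul, mul_pow, norm_inv, Complex.norm_real, Real.norm_eq_abs,
      abs_of_nonneg (Real.sqrt_nonneg _), inv_pow, Real.sq_sqrt hc.le]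
    rw [tsum_mul_left, (ω.hasSum_norm_map_sq hp).tsum_eq, inv_mul_cancel₀ hc.ne']

lemma compress_supportedIn (hp : IsProjection p) (hc : 0 < (ω.apply p).re) :
    (ω.compress hp hc).SupportedIn p := fun n => by
  simp only [compress, map_smul, hp.map_map]

lemma apply_mul_mul_eq_mul_apply_compress (hp : IsProjection p) (hc : 0 < (ω.apply p).re)
    (z : Op H) : ω.apply (p * z * p) = (ω.apply p).re * (ω.compress hp hc).apply z := by
  have hterm : ∀ n, ⟪(ω.compress hp hc).ξ n, z ((ω.compress hp hc).ξ n)⟫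
      = ((ω.apply p).re⁻¹ : ℂ) * ⟪ω.ξ n, (p * z * p) (ω.ξ n)⟫ := by
    intro n
    simp only [compress, map_smul, inner_smul_left, inner_smul_right, hp.inner_mul_mul,
      ← mul_assoc, map_inv₀, Complex.conj_ofReal]
    norm_cast
    rw [← mul_inv, Real.mul_self_sqrt hc.le]
  simp only [apply] at hterm ⊢
  rw [tsum_congr hterm, tsum_mul_left, ← mul_assoc, mul_inv_cancel₀ (by exact_mod_cast hc.ne'),
    one_mul]

def ofUnitVector (v : H) (hv : ‖v‖ = 1) : NormalState H where
  ξ := Pi.single 0 v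
  norm_sum := by
    rw [← tsum_pi_single 0 (1 : ℝ)]
    exact tsum_congr fun n => by by_cases hn : n = 0 <;> simp [hn, hv]

lemma apply_ofUnitVector (v : H) (hv : ‖v‖ = 1) (x : Op H) :
    (ofUnitVector v hv).apply x = ⟪v, x v⟫ := by
  rw [apply, ← tsum_pi_single 0 ⟪v, x v⟫]
  exact tsum_congr fun n => by by_cases hn : n = 0 <;> simp [ofUnitVector, hn]

end NormalState

namespace IsCPMap

variable {S : Set (Op H)} {τ : Op H → Op H}

lemma inner_nonneg (hτ : IsCPMap S τ) {a : Op H} (ha : a ∈ S) (v : H) :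
    0 ≤ ⟪v, τ (star a * a) v⟫ := by
  simpa using hτ 1 (fun _ => a) (fun _ => v) (fun _ => ha)

lemma norm_inner_sq_le (hτ : IsCPMap S τ) {a b : Op H} (ha : a ∈ S) (hb : b ∈ S) (u v : H) :
    ‖⟪u, τ (star a * b) v⟫‖ ^ 2 ≤ (⟪u, τ (star a * a) u⟫).re * (⟪v, τ (star b * b) v⟫).re := by
  set A := ⟪u, τ (star a * a) u⟫
  set B := ⟪u, τ (star a * b) v⟫
  set G := ⟪v, τ (star b * a) u⟫
  set C := ⟪v, τ (star b * b) v⟫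
  have hA := Complex.nonneg_iff.mp (hτ.inner_nonneg ha u)
  have hC := Complex.nonneg_iff.mp (hτ.inner_nonneg hb v)
  have hpos : ∀ μ : ℂ, 0 ≤ A + μ * B + starRingEnd ℂ μ * G + starRingEnd ℂ μ * μ * C := by
    intro μ
    have h := hτ 2 ![a, b] ![u, μ • v] (fun i => by fin_cases i <;> simp [ha, hb])
    simp only [Fin.sum_univ_two, Matrix.cons_val_zero, Matrix.cons_val_one,
      inner_smul_left, inner_smul_right, map_smul] at h
    convert h using 1
    ring
  -- The form is real at `μ = 1` and at `μ = I`, which forces `G = conj B`.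
  have hG : G = starRingEnd ℂ B := by
    have h1 := (Complex.nonneg_iff.mp (hpos 1)).2
    have hI := (Complex.nonneg_iff.mp (hpos Complex.I)).2
    simp only [one_mul, map_one, mul_one, Complex.add_im, Complex.conj_I, neg_mul,
      Complex.I_mul_I, neg_neg, Complex.mul_im, Complex.I_re, zero_mul, Complex.I_im, zero_add,
      Complex.neg_im] at h1 hI
    apply Complex.ext <;> simp only [Complex.conj_re, Complex.conj_im] <;> linarith
  have hquad : ∀ t : ℝ, 0 ≤ (‖B‖ ^ 2 * C.re) * (t * t) + (-2 * ‖B‖ ^ 2) * t + A.re := by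
    intro t
    have h := (Complex.nonneg_iff.mp (hpos (-t * starRingEnd ℂ B))).1
    rw [hG] at h
    rw [Complex.sq_norm, Complex.normSq_apply]
    simp only [neg_mul, map_neg, map_mul, Complex.conj_ofReal, RingHomCompTriple.comp_apply,
      RingHom.id_apply, mul_neg, neg_neg, Complex.add_re, Complex.neg_re, Complex.mul_re,
      Complex.ofReal_re, Complex.conj_re, Complex.ofReal_im, Complex.conj_im, zero_mul, neg_zero,
      sub_zero, Complex.mul_im, add_zero, sub_neg_eq_add, neg_add_rev] at h
    nlinarith [h]
  have hd := discrim_le_zero hquad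
  rw [discrim] at hd
  rcases (sq_nonneg ‖B‖).eq_or_lt with h0 | h0
  · rw [← h0]
    exact mul_nonneg hA.1 hC.1
  · nlinarith

lemma inner_map_mul_eq_zero_left (hτ : IsCPMap S τ) {q w : Op H} (hq : q ∈ S)
    (hqproj : IsProjection q) (hw : w ∈ S) {v : H} (hv : ⟪v, τ q v⟫ = 0) :
    ⟪v, τ (q * w) v⟫ = 0 := by
  have h := hτ.norm_inner_sq_le hq hw v v
  rw [hqproj.star_mul_self, hv, Complex.zero_re, zero_mul, hqproj.1.star_eq] at h
  exact norm_eq_zero.mp (pow_eq_zero_iff two_ne_zero |>.mp (le_antisymm h (sq_nonneg _)))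

lemma inner_map_mul_eq_zero_right (hτ : IsCPMap S τ) {q w : Op H} (hq : q ∈ S)
    (hqproj : IsProjection q) (hw : star w ∈ S) {v : H} (hv : ⟪v, τ q v⟫ = 0) :
    ⟪v, τ (w * q) v⟫ = 0 := by
  have h := hτ.norm_inner_sq_le hw hq v v
  rw [hqproj.star_mul_self, hv, Complex.zero_re, mul_zero, star_star] at h
  exact norm_eq_zero.mp (pow_eq_zero_iff two_ne_zero |>.mp (le_antisymm h (sq_nonneg _)))

end IsCPMap

namespace MarkovMap

variable {S : Set (Op H)} (M : MarkovMap S) {p : Op H}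

lemma norm_inner_map_le {y : Op H} (hy : y ∈ S) (v : H) : ‖⟪v, M.τ y v⟫‖ ≤ ‖y‖ * ‖v‖ ^ 2 := by
  rcases eq_or_ne v 0 with rfl | hv
  · simp
  set w : H := ((‖v‖⁻¹ : ℝ) : ℂ) • v
  have hw : ‖w‖ = 1 := by
    rw [norm_smul, Complex.norm_real, norm_inv, norm_norm,
      inv_mul_cancel₀ (norm_ne_zero_iff.mpr hv)]
  have hvw : v = ((‖v‖ : ℝ) : ℂ) • w := by
    rw [smul_smul, ← Complex.ofReal_mul, mul_inv_cancel₀ (norm_ne_zero_iff.mpr hv),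
      Complex.ofReal_one, one_smul]
  obtain ⟨ω, hω⟩ := M.normal (NormalState.ofUnitVector w hw)
  have h := hω y hy
  rw [NormalState.apply_ofUnitVector] at h
  rw [hvw, map_smul, inner_smul_left, inner_smul_right, h, norm_mul, norm_mul, Complex.norm_conj,
    Complex.norm_real, norm_norm, norm_smul, hw, Complex.norm_real, norm_norm]
  nlinarith [ω.norm_apply_le y, norm_nonneg v]

lemma norm_map_le (hS : IsVN S) {x : Op H} (hx : x ∈ S) : ‖M.τ x‖ ≤ ‖x‖ := by
  have hinner : ∀ u v : H, ‖⟪u, M.τ x v⟫‖ ≤ ‖x‖ * (‖u‖ * ‖v‖) := by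
    intro u v
    have hcs := M.cp.norm_inner_sq_le hS.one_mem hx u v
    rw [star_one, one_mul, one_mul, M.unital, one_apply_eq_self,
      show (⟪u, u⟫).re = ‖u‖ ^ 2 from inner_self_eq_norm_sq (𝕜 := ℂ) u] at hcs
    have hxx : (⟪v, M.τ (star x * x) v⟫).re ≤ ‖x‖ ^ 2 * ‖v‖ ^ 2 :=
      (Complex.re_le_norm _).trans <| (M.norm_inner_map_le (hS.mul_mem (hS.1 x hx) hx) v).trans_eq
        (by rw [CStarRing.norm_star_mul_self]; ring)
    refine (pow_le_pow_iff_left₀ (norm_nonneg _) (by positivity) two_ne_zero).mp ?_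
    calc ‖⟪u, M.τ x v⟫‖ ^ 2 ≤ ‖u‖ ^ 2 * (‖x‖ ^ 2 * ‖v‖ ^ 2) := hcs.trans (by gcongr)
      _ = (‖x‖ * (‖u‖ * ‖v‖)) ^ 2 := by ring
  refine ContinuousLinearMap.opNorm_le_bound _ (norm_nonneg x) fun v => ?_
  have h := hinner (M.τ x v) v
  rw [inner_self_eq_norm_sq_to_K, norm_pow, RCLike.norm_ofReal, abs_norm] at h
  nlinarith [norm_nonneg (M.τ x v), mul_nonneg (norm_nonneg x) (norm_nonneg v)]

lemma inner_map_one_sub_eq_zero (hS : IsVN S) (hp : p ∈ S) (hproj : IsProjection p)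
    (hsub : opLE p (M.τ p)) {v : H} (hv : p v = v) : ⟪v, M.τ (1 - p) v⟫ = 0 := by
  have hnonneg := M.cp.inner_nonneg (hS.sub_mem hS.one_mem hp) v
  rw [hproj.one_sub.star_mul_self] at hnonneg
  have hsplit : M.τ (1 - p) = (1 - p) - (M.τ p - p) := by
    rw [M.linear.map_sub, M.unital]
    abel
  have hle : ⟪v, M.τ (1 - p) v⟫ ≤ 0 := by
    rw [hsplit, sub_apply, inner_sub_right, sub_apply, one_apply_eq_self, hv, sub_self,
      inner_zero_right, zero_sub, neg_nonpos]
    exact hsub.inner_nonneg_right v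
  exact le_antisymm hle hnonneg

lemma apply_map_mul_mul (hS : IsVN S) (hp : p ∈ S) (hproj : IsProjection p)
    (hsub : opLE p (M.τ p)) {ω : NormalState H} (hω : ω.SupportedIn p) {w : Op H}
    (hw : w ∈ S) : ω.apply (M.τ (p * w * p)) = ω.apply (M.τ w) := by
  have hq : 1 - p ∈ S := hS.sub_mem hS.one_mem hp
  have hsplit : M.τ w = M.τ (p * w * p) + M.τ ((1 - p) * w) + M.τ (p * w * (1 - p)) := by
    rw [← M.linear.map_add, ← M.linear.map_add]
    congr 1
    noncomm_ring
  refine tsum_congr fun n => ?_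
  have hn := M.inner_map_one_sub_eq_zero hS hp hproj hsub (hω n)
  have hpw : star (p * w) ∈ S := hS.1 _ (hS.mul_mem hp hw)
  rw [hsplit, add_apply, add_apply, inner_add_right, inner_add_right,
    M.cp.inner_map_mul_eq_zero_left hq hproj.one_sub hw hn,
    M.cp.inner_map_mul_eq_zero_right hq hproj.one_sub hpw hn, add_zero, add_zero]

lemma norm_apply_map_sub_le (hS : IsVN S) (hp : p ∈ S) (hproj : IsProjection p)
    (hsub : opLE p (M.τ p)) {φ : NormalState H} (hφ : φ.SupportedIn p) (ψ : NormalState H)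
    (hc : 0 < (ψ.apply p).re) {x : Op H} (hx : x ∈ S) (hx1 : ‖x‖ ≤ 1) :
    ‖ψ.apply (M.τ x) - φ.apply x‖ ≤ 2 * √(1 - (ψ.apply p).re) + (1 - (ψ.apply p).re) +
      ‖(ψ.compress hproj hc).apply (p * M.τ (p * x * p) * p) - φ.apply (p * x * p)‖ := by
  set c := (ψ.apply p).re
  set ψ' := ψ.compress hproj hc
  have hψ' := ψ.compress_supportedIn hproj hc
  have hred : ψ.apply (p * M.τ x * p) = c * ψ'.apply (p * M.τ (p * x * p) * p) := by
    rw [ψ.apply_mul_mul_eq_mul_apply_compress hproj hc, hψ'.apply_mul_mul hproj,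
      M.apply_map_mul_mul hS hp hproj hsub hψ' hx]
  have hc1 : c ≤ 1 := (Complex.re_le_norm _).trans ((ψ.norm_apply_le p).trans hproj.norm_le_one)
  have hφx : ‖φ.apply (p * x * p)‖ ≤ 1 :=
    (φ.norm_apply_le _).trans ((hproj.norm_mul_mul_le x).trans hx1)
  have hcut := ψ.norm_apply_sub_apply_mul_mul_le hproj (M.τ x)
  have hτx : ‖M.τ x‖ ≤ 1 := (M.norm_map_le hS hx).trans hx1
  calc ‖ψ.apply (M.τ x) - φ.apply x‖
      = ‖(ψ.apply (M.τ x) - ψ.apply (p * M.τ x * p)) + (1 - c) * (-φ.apply (p * x * p)) +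
          c * (ψ'.apply (p * M.τ (p * x * p) * p) - φ.apply (p * x * p))‖ := by
        rw [hred, hφ.apply_mul_mul hproj]
        ring_nf
    _ ≤ ‖ψ.apply (M.τ x) - ψ.apply (p * M.τ x * p)‖ + (1 - c) * ‖φ.apply (p * x * p)‖ +
          c * ‖ψ'.apply (p * M.τ (p * x * p) * p) - φ.apply (p * x * p)‖ := by
        have hnorm_c : ‖(c : ℂ)‖ = c := by rw [Complex.norm_real, Real.norm_of_nonneg hc.le]
        have hnorm_one_sub : ‖1 - (c : ℂ)‖ = 1 - c := by
          rw [← Complex.ofReal_one, ← Complex.ofReal_sub, Complex.norm_real,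
            Real.norm_of_nonneg (by linarith)]
        refine (norm_add₃_le).trans_eq ?_
        rw [norm_mul, norm_mul, norm_neg, hnorm_c, hnorm_one_sub]
    _ ≤ 2 * √(1 - c) + (1 - c) + ‖ψ'.apply (p * M.τ (p * x * p) * p) - φ.apply (p * x * p)‖ := by
        have h1 : ‖ψ.apply (M.τ x) - ψ.apply (p * M.τ x * p)‖ ≤ 2 * 1 * √(1 - c) :=
          hcut.trans (by gcongr)
        have h2 := mul_le_of_le_one_right (by linarith : 0 ≤ 1 - c) hφx
        have h3 := mul_le_of_le_one_left (norm_nonneg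
          (ψ'.apply (p * M.τ (p * x * p) * p) - φ.apply (p * x * p))) hc1
        linarith

end MarkovMap

/-- `‖F t - G‖ → 0` as `t → ∞`, in the norm of functionals on `S`. -/
def TendstoInNorm (S : Set (Op H)) (F : ℝ → Op H → ℂ) (G : Op H → ℂ) : Prop :=
  ∀ ε : ℝ, 0 < ε → ∃ T₀ : ℝ, ∀ t, T₀ ≤ t → ∀ x ∈ S, ‖x‖ ≤ 1 → ‖F t x - G x‖ ≤ ε

namespace MarkovSemigroup

variable {S : Set (Op H)} (T : MarkovSemigroup S) {p : Op H}

def toMarkovMap {t : ℝ} (ht : 0 ≤ t) : MarkovMap S :=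
  ⟨T.τ t, T.maps t ht, T.linear t ht, T.unital t ht, T.cp t ht, T.normal t ht⟩

lemma tendsto_apply_map (hS : IsVN S) (hp : p ∈ S) (hproj : IsProjection p)
    (hlim : ∀ v : H, Tendsto (fun t => T.τ t p v) atTop (𝓝 v)) (ω : NormalState H) :
    Tendsto (fun t => ω.apply (T.τ t p)) atTop (𝓝 1) :=
  ω.apply_one ▸ ω.tendsto_apply (B := 1) hlim ((eventually_ge_atTop 0).mono fun _ ht =>
    ((T.toMarkovMap ht).norm_map_le hS hp).trans hproj.norm_le_one)

lemma tendstoInNorm_reduced (hS : IsVN S) (hp : p ∈ S) (hproj : IsProjection p)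
    {φ ω : NormalState H} (hω : ω.SupportedIn p)
    (h : TendstoInNorm S (fun t x => ω.apply (T.τ t x)) φ.apply) :
    TendstoInNorm S (fun t x => ω.apply (p * T.τ t (p * x * p) * p))
      (fun x => φ.apply (p * x * p)) := by
  intro ε hε
  obtain ⟨T₀, hT₀⟩ := h ε hε
  refine ⟨T₀, fun t ht x hx hx1 => ?_⟩
  beta_reduce
  rw [hω.apply_mul_mul hproj]
  exact hT₀ t ht _ (hS.mul_mem (hS.mul_mem hp hx) hp) ((hproj.norm_mul_mul_le x).trans hx1)

lemma tendstoInNorm_of_reduced (hS : IsVN S) (hp : p ∈ S) (hproj : IsProjection p)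
    (hsub : ∀ t, 0 ≤ t → opLE p (T.τ t p))
    (hlim : ∀ v : H, Tendsto (fun t => T.τ t p v) atTop (𝓝 v))
    {φ : NormalState H} (hφ : φ.SupportedIn p)
    (h : ∀ ω : NormalState H, ω.SupportedIn p →
      TendstoInNorm S (fun t x => ω.apply (p * T.τ t (p * x * p) * p))
        (fun x => φ.apply (p * x * p)))
    (ω : NormalState H) : TendstoInNorm S (fun t x => ω.apply (T.τ t x)) φ.apply := by
  intro ε hε
  have hc : Tendsto (fun s => (ω.apply (T.τ s p)).re) atTop (𝓝 1) :=
    (Complex.continuous_re.tendsto 1).comp (T.tendsto_apply_map hS hp hproj hlim ω)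
  have herr : Tendsto (fun s => 2 * √(1 - (ω.apply (T.τ s p)).re) + (1 - (ω.apply (T.τ s p)).re))
      atTop (𝓝 0) := by
    have hcont : Continuous fun c : ℝ => 2 * √(1 - c) + (1 - c) := by fun_prop
    simpa only [Function.comp_def, sub_self, Real.sqrt_zero, mul_zero, add_zero] using
      (hcont.tendsto 1).comp hc
  obtain ⟨s, hs0, hcpos, hsmall⟩ := ((eventually_ge_atTop 0).and
    ((hc.eventually (lt_mem_nhds one_pos)).and
      (herr.eventually (gt_mem_nhds (half_pos hε))))).exists
  obtain ⟨ψ, hψ⟩ := T.normal s hs0 ω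
  rw [hψ p hp] at hcpos hsmall
  obtain ⟨T₀, hT₀⟩ := h _ (ψ.compress_supportedIn hproj hcpos) (ε / 2) (half_pos hε)
  refine ⟨s + max T₀ 0, fun t ht x hx hx1 => ?_⟩
  have hr : 0 ≤ t - s := by linarith [le_max_right T₀ 0]
  have hshift : ω.apply (T.τ t x) = ψ.apply (T.τ (t - s) x) := by
    rw [← hψ _ (T.maps _ hr x hx), ← T.comp s (t - s) hs0 hr x hx, add_sub_cancel]
  beta_reduce at hT₀ ⊢
  rw [hshift]
  refine ((T.toMarkovMap hr).norm_apply_map_sub_le hS hp hproj (hsub _ hr) hφ ψ hcpos hx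
    hx1).trans ?_
  have := hT₀ (t - s) (by linarith [le_max_left T₀ 0]) x hx hx1
  simp only [toMarkovMap] at this ⊢
  linarith

end MarkovSemigroup

lemma InvariantState.supportedIn {S : Set (Op H)} {T : MarkovSemigroup S} {φ : NormalState H}
    (hinv : InvariantState T φ) (hS : IsVN S) {p : Op H} (hp : p ∈ S) (hproj : IsProjection p)
    (hlim : ∀ v : H, Tendsto (fun t => T.τ t p v) atTop (𝓝 v)) : φ.SupportedIn p := by
  have hconst : ∀ᶠ t in atTop, φ.apply p = φ.apply (T.τ t p) :=
    (eventually_ge_atTop 0).mono fun t ht => (hinv t ht p hp).symm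
  have hone : φ.apply p = 1 :=
    tendsto_nhds_unique (tendsto_const_nhds.congr' hconst) (T.tendsto_apply_map hS hp hproj hlim φ)
  exact NormalState.supportedIn_of_apply_eq_one hproj (by rw [hone, Complex.one_re])

theorem statement3_general
    {H : Type u} [NormedAddCommGroup H] [InnerProductSpace ℂ H] [CompleteSpace H]
    (S : Set (Op H)) (hS : IsVN S)
    (T : MarkovSemigroup S) (φ : NormalState H)
    (hinv : InvariantState T φ)
    (p : Op H) (hp : p ∈ S) (hproj : IsProjection p)
    (hsub : ∀ t, 0 ≤ t → opLE p (T.τ t p))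
    (hlim : ∀ v : H, Tendsto (fun t => T.τ t p v) atTop (𝓝 v)) :
    ((∀ ω : NormalState H, ∀ ε : ℝ, 0 < ε → ∃ T₀ : ℝ, ∀ t, T₀ ≤ t →
        ∀ x ∈ S, ‖x‖ ≤ 1 → ‖ω.apply (T.τ t x) - φ.apply x‖ ≤ ε) ↔
      (∀ ω : NormalState H, (∀ n, p (ω.ξ n) = ω.ξ n) →
        ∀ ε : ℝ, 0 < ε → ∃ T₀ : ℝ, ∀ t, T₀ ≤ t →
          ∀ x ∈ S, ‖x‖ ≤ 1 →
            ‖ω.apply (p * T.τ t (p * x * p) * p) - φ.apply (p * x * p)‖ ≤ ε)) :=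
  ⟨fun h ω hω => T.tendstoInNorm_reduced hS hp hproj hω (h ω),
    T.tendstoInNorm_of_reduced hS hp hproj hsub hlim (hinv.supportedIn hS hp hproj hlim)⟩

/-- Theorem 2.4.  Let `p` be a sub-harmonic projection
(`τ_t(p) ≥ p`) for a quantum dynamical semigroup `(A₀,τ_t,φ₀)` with normal invariant
state `φ₀`, such that `τ_t(p) → 1` strongly.  Then `‖φ ∘ τ_t − φ₀‖ → 0` for every normal
state `φ` on `A₀` if and only if `‖φᵖ ∘ τᵖ_t − φᵖ₀‖ → 0` for every normal state `φᵖ` on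
the reduced algebra `Aᵖ₀ = pA₀p`, where `τᵖ_t(x) = pτ_t(pxp)p` and `φᵖ₀(x) = φ₀(pxp)`. -/
theorem statement3
    {H : Type u} [NormedAddCommGroup H] [InnerProductSpace ℂ H] [CompleteSpace H]
    (S : Set (Op H)) (hS : IsVN S) (hone : (1 : Op H) ∈ S)
    (T : MarkovSemigroup S) (φ : NormalState H)
    (hinv : InvariantState T φ)
    (p : Op H) (hp : p ∈ S) (hproj : IsProjection p)
    (hsub : ∀ t, 0 ≤ t → opLE p (T.τ t p))
    (hlim : ∀ v : H, Tendsto (fun t => T.τ t p v) atTop (𝓝 v)) :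
    ((∀ ω : NormalState H, ∀ ε : ℝ, 0 < ε → ∃ T₀ : ℝ, ∀ t, T₀ ≤ t →
        ∀ x ∈ S, ‖x‖ ≤ 1 → ‖ω.apply (T.τ t x) - φ.apply x‖ ≤ ε) ↔
      (∀ ω : NormalState H, (∀ n, p (ω.ξ n) = ω.ξ n) →
        ∀ ε : ℝ, 0 < ε → ∃ T₀ : ℝ, ∀ t, T₀ ≤ t →
          ∀ x ∈ S, ‖x‖ ≤ 1 →
            ‖ω.apply (p * T.τ t (p * x * p) * p) - φ.apply (p * x * p)‖ ≤ ε)) :=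
  statement3_general S hS T φ hinv p hp hproj hsub hlim

end Paper
end
end

section
/- Let (A₀, τ_t, φ₀) be a Markov semigroup with faithful normal invariant state φ₀ and let (τ̃_t) be the adjoint semigroup. Then the following are equivalent: (a) φ₀(τ̃_t(x) τ̃_t(y)) → φ₀(x)φ₀(y) as t → ∞ for all x, y ∈ A₀ (Kolmogorov property of the adjoint semigroup); (b) ||φ ∘ τ_t − φ₀|| → 0 as t → ∞ for every normal state φ on A₀ (strong ergodicity of (τ_t)). -/
noncomputable section
open Filter Topology
open scoped ComplexOrder

namespace Paper

local notation "⟪" x ", " y "⟫" => @inner ℂ _ _ x y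

variable {H : Type u} [NormedAddCommGroup H] [InnerProductSpace ℂ H] [CompleteSpace H]

/-! ### Auxiliary machinery: the Hilbert space `ℓ²(ℕ, H)` and diagonal operators -/

section Aux

variable {H : Type u} [NormedAddCommGroup H] [InnerProductSpace ℂ H] [CompleteSpace H]

abbrev K2 (H : Type u) [NormedAddCommGroup H] [InnerProductSpace ℂ H] [CompleteSpace H] :=
  lp (fun _ : ℕ => H) 2

open scoped ENNReal in
lemma rclike_coe (r : ℝ) : (RCLike.ofReal r : ℂ) = Complex.ofReal r := rfl

lemma two_toReal : ((2 : ENNReal)).toReal = (2 : ℝ) := by norm_num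

lemma memℓp_two_of_sq_summable {f : ℕ → H} (hf : Summable fun n => ‖f n‖ ^ 2) :
    Memℓp f 2 := by
  apply memℓp_gen
  rw [two_toReal]
  convert hf using 2 with n
  rw [← Real.rpow_natCast (‖f n‖) 2]
  norm_num

lemma sq_summable_of_memℓp {f : ℕ → H} (hf : Memℓp f 2) :
    Summable fun n => ‖f n‖ ^ 2 := by
  have := hf.summable (by rw [two_toReal]; norm_num)
  rw [two_toReal] at this
  convert this using 2 with n
  rw [← Real.rpow_natCast (‖f n‖) 2]
  norm_num

lemma norm_sq_eq_tsum (f : K2 H) : ‖f‖ ^ 2 = ∑' n, ‖f n‖ ^ 2 := by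
  have h1 : (⟪f, f⟫ : ℂ) = ∑' n, ⟪f n, f n⟫ := lp.inner_eq_tsum f f
  have h2 : ∀ n, (⟪f n, f n⟫ : ℂ) = ((‖f n‖ ^ 2 : ℝ) : ℂ) := by
    intro n; rw [inner_self_eq_norm_sq_to_K]; norm_num
  have h3 : (⟪f, f⟫ : ℂ) = ((‖f‖ ^ 2 : ℝ) : ℂ) := by
    rw [inner_self_eq_norm_sq_to_K]; norm_num
  rw [h3] at h1
  have h4 : (⟪f, f⟫ : ℂ) = ∑' n, ((‖f n‖ ^ 2 : ℝ) : ℂ) := by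
    rw [lp.inner_eq_tsum]; exact tsum_congr h2
  rw [h3] at h4
  have h5 : ((‖f‖ ^ 2 : ℝ) : ℂ) = ((∑' n, ‖f n‖ ^ 2 : ℝ) : ℂ) := by
    rw [h4, Complex.ofReal_tsum]
  exact_mod_cast h5

lemma summable_sq (f : K2 H) : Summable fun n => ‖f n‖ ^ 2 :=
  sq_summable_of_memℓp (lp.memℓp f)

lemma diag_memℓp (x : Op H) (f : K2 H) : Memℓp (fun n => x (f n)) 2 := by
  apply memℓp_two_of_sq_summable
  apply Summable.of_nonneg_of_le (fun n => by positivity)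
    (fun n => ?_) ((summable_sq f).mul_left (‖x‖ ^ 2))
  calc ‖x (f n)‖ ^ 2 ≤ (‖x‖ * ‖f n‖) ^ 2 := by
        apply pow_le_pow_left₀ (norm_nonneg _) (x.le_opNorm (f n))
    _ = ‖x‖ ^ 2 * ‖f n‖ ^ 2 := by ring

lemma diag_norm_bound (x : Op H) (f : K2 H) :
    ‖(⟨fun n => x (f n), diag_memℓp x f⟩ : K2 H)‖ ≤ ‖x‖ * ‖f‖ := by
  have h1 : ‖(⟨fun n => x (f n), diag_memℓp x f⟩ : K2 H)‖ ^ 2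
      = ∑' n, ‖x (f n)‖ ^ 2 := norm_sq_eq_tsum _
  have h2 : ∑' n, ‖x (f n)‖ ^ 2 ≤ ‖x‖ ^ 2 * ‖f‖ ^ 2 := by
    rw [norm_sq_eq_tsum f, ← tsum_mul_left]
    apply Summable.tsum_le_tsum _ _ ((summable_sq f).mul_left _)
    · intro n
      calc ‖x (f n)‖ ^ 2 ≤ (‖x‖ * ‖f n‖) ^ 2 := by
            apply pow_le_pow_left₀ (norm_nonneg _) (x.le_opNorm (f n))
        _ = ‖x‖ ^ 2 * ‖f n‖ ^ 2 := by ring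
    · exact (summable_sq (⟨fun n => x (f n), diag_memℓp x f⟩ : K2 H))
  have h3 : ‖(⟨fun n => x (f n), diag_memℓp x f⟩ : K2 H)‖ ^ 2 ≤ (‖x‖ * ‖f‖) ^ 2 := by
    rw [h1]; calc ∑' n, ‖x (f n)‖ ^ 2 ≤ ‖x‖ ^ 2 * ‖f‖ ^ 2 := h2
      _ = (‖x‖ * ‖f‖) ^ 2 := by ring
  have := Real.sqrt_le_sqrt h3
  rwa [Real.sqrt_sq (norm_nonneg _), Real.sqrt_sq (by positivity)] at this

/-- The diagonal (amplification) operator on `ℓ²(ℕ, H)`. -/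
def diag (x : Op H) : Op (K2 H) :=
  LinearMap.mkContinuous
    { toFun := fun f => (⟨fun n => x (f n), diag_memℓp x f⟩ : K2 H)
      map_add' := fun f g => by
        apply lp.ext; funext n
        simp only [lp.coeFn_add, Pi.add_apply]
        exact map_add x _ _
      map_smul' := fun c f => by
        apply lp.ext; funext n
        simp only [lp.coeFn_smul, Pi.smul_apply, RingHom.id_apply]
        exact map_smul x c _ }
    ‖x‖ (fun f => diag_norm_bound x f)

@[simp] lemma diag_apply (x : Op H) (f : K2 H) (n : ℕ) : (diag x f) n = x (f n) := rfl

lemma norm_diag_apply_le (x : Op H) (f : K2 H) : ‖diag x f‖ ≤ ‖x‖ * ‖f‖ :=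
  diag_norm_bound x f

lemma inner_diag (x : Op H) (f g : K2 H) :
    ⟪f, diag x g⟫ = ∑' n, ⟪f n, x (g n)⟫ :=
  lp.inner_eq_tsum f (diag x g)

lemma diag_one : diag (1 : Op H) = 1 := by
  ext f : 1; apply lp.ext; funext n; rfl

lemma diag_mul (x y : Op H) : diag (x * y) = diag x * diag y := by
  ext f : 1; apply lp.ext; funext n; rfl

lemma diag_add (x y : Op H) : diag (x + y) = diag x + diag y := by
  ext f : 1; apply lp.ext; funext n
  simp only [diag_apply, ContinuousLinearMap.add_apply, lp.coeFn_add, Pi.add_apply, diag_apply]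

lemma diag_smul (c : ℂ) (x : Op H) : diag (c • x) = c • diag x := by
  ext f : 1; apply lp.ext; funext n
  simp only [diag_apply, ContinuousLinearMap.smul_apply, lp.coeFn_smul, Pi.smul_apply, diag_apply]

lemma diag_sub (x y : Op H) : diag (x - y) = diag x - diag y := by
  ext f : 1; apply lp.ext; funext n
  simp only [diag_apply, ContinuousLinearMap.sub_apply, lp.coeFn_sub, Pi.sub_apply, diag_apply]

lemma diag_star (x : Op H) : diag (star x) = star (diag x) := by
  rw [ContinuousLinearMap.star_eq_adjoint (A := diag x)]
  rw [ContinuousLinearMap.eq_adjoint_iff]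
  intro f g
  rw [lp.inner_eq_tsum, lp.inner_eq_tsum]
  apply tsum_congr; intro n
  show ⟪(star x) (f n), (g n : H)⟫ = ⟪(f n : H), x (g n)⟫
  rw [ContinuousLinearMap.star_eq_adjoint, ContinuousLinearMap.adjoint_inner_left]

lemma inner_diag_star_left (x : Op H) (f g : K2 H) :
    ⟪diag (star x) f, g⟫ = ⟪f, diag x g⟫ := by
  rw [diag_star, ContinuousLinearMap.star_eq_adjoint, ContinuousLinearMap.adjoint_inner_left]

/-! ### Normal states as vectors in `ℓ²(ℕ, H)` -/

lemma NormalState.summable_sq (ω : NormalState H) : Summable fun n => ‖ω.ξ n‖ ^ 2 := by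
  by_contra h
  have := tsum_eq_zero_of_not_summable h
  rw [ω.norm_sum] at this
  norm_num at this

/-- The vector in `ℓ²(ℕ, H)` representing a normal state. -/
def NormalState.vec (ω : NormalState H) : K2 H :=
  ⟨ω.ξ, memℓp_two_of_sq_summable ω.summable_sq⟩

@[simp] lemma NormalState.vec_apply (ω : NormalState H) (n : ℕ) : ω.vec n = ω.ξ n := rfl

lemma NormalState.norm_vec_sq (ω : NormalState H) : ‖ω.vec‖ ^ 2 = 1 := by
  rw [norm_sq_eq_tsum]; exact ω.norm_sum

lemma NormalState.norm_vec (ω : NormalState H) : ‖ω.vec‖ = 1 := by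
  have h := ω.norm_vec_sq
  nlinarith [norm_nonneg ω.vec]

lemma NormalState.apply_eq (ω : NormalState H) (x : Op H) :
    ω.apply x = ⟪ω.vec, diag x ω.vec⟫ :=
  (inner_diag x ω.vec ω.vec).symm

lemma NormalState.apply_one_s8 (ω : NormalState H) : ω.apply (1 : Op H) = 1 := by
  rw [ω.apply_eq, diag_one, ContinuousLinearMap.one_apply, inner_self_eq_norm_sq_to_K]
  rw_mod_cast [ω.norm_vec_sq]
  norm_num

lemma NormalState.apply_norm_le (ω : NormalState H) (x : Op H) : ‖ω.apply x‖ ≤ ‖x‖ := by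
  rw [ω.apply_eq]
  calc ‖⟪ω.vec, diag x ω.vec⟫‖ ≤ ‖ω.vec‖ * ‖diag x ω.vec‖ := norm_inner_le_norm _ _
    _ ≤ ‖ω.vec‖ * (‖x‖ * ‖ω.vec‖) := by
        apply mul_le_mul_of_nonneg_left (norm_diag_apply_le x ω.vec) (norm_nonneg _)
    _ = ‖x‖ := by rw [ω.norm_vec]; ring

lemma NormalState.apply_mul (ω : NormalState H) (a b : Op H) :
    ω.apply (a * b) = ⟪diag (star a) ω.vec, diag b ω.vec⟫ := by
  rw [ω.apply_eq, diag_mul, ContinuousLinearMap.mul_apply, inner_diag_star_left]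

lemma NormalState.apply_star (ω : NormalState H) (a : Op H) :
    ω.apply (star a) = starRingEnd ℂ (ω.apply a) := by
  rw [ω.apply_eq, ω.apply_eq, ← inner_conj_symm, inner_diag_star_left]

lemma NormalState.apply_smulOp (ω : NormalState H) (c : ℂ) (x : Op H) :
    ω.apply (c • x) = c * ω.apply x := by
  rw [ω.apply_eq, ω.apply_eq, diag_smul, ContinuousLinearMap.smul_apply, inner_smul_right]

lemma NormalState.apply_addOp (ω : NormalState H) (x y : Op H) :
    ω.apply (x + y) = ω.apply x + ω.apply y := by
  rw [ω.apply_eq, ω.apply_eq, ω.apply_eq, diag_add, ContinuousLinearMap.add_apply,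
    inner_add_right]

lemma NormalState.apply_subOp (ω : NormalState H) (x y : Op H) :
    ω.apply (x - y) = ω.apply x - ω.apply y := by
  rw [ω.apply_eq, ω.apply_eq, ω.apply_eq, diag_sub, ContinuousLinearMap.sub_apply,
    inner_sub_right]

/-- The normal state associated with a unit vector of `ℓ²(ℕ, H)`. -/
def vecState (v : K2 H) (hv : ‖v‖ = 1) : NormalState H where
  ξ := fun n => v n
  norm_sum := by rw [← norm_sq_eq_tsum, hv]; norm_num

lemma vecState_apply (v : K2 H) (hv : ‖v‖ = 1) (x : Op H) :
    (vecState v hv).apply x = ⟪v, diag x v⟫ :=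
  (inner_diag x v v).symm

end Aux


/-! ### Closure properties of a von Neumann algebra given by `IsVN` -/

section VN

variable {H : Type u} [NormedAddCommGroup H] [InnerProductSpace ℂ H] [CompleteSpace H]
variable {S : Set (Op H)}

lemma IsVN.star_mem (hS : IsVN S) {x : Op H} (hx : x ∈ S) : star x ∈ S := hS.1 x hx

lemma IsVN.mul_mem_s8 (hS : IsVN S) {x y : Op H} (hx : x ∈ S) (hy : y ∈ S) : x * y ∈ S := by
  rw [← hS.2] at hx hy ⊢
  exact Set.mul_mem_centralizer hx hy

lemma IsVN.add_mem (hS : IsVN S) {x y : Op H} (hx : x ∈ S) (hy : y ∈ S) : x + y ∈ S := by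
  rw [← hS.2] at hx hy ⊢
  exact Set.add_mem_centralizer hx hy

lemma IsVN.smul_mem (hS : IsVN S) (c : ℂ) {x : Op H} (hx : x ∈ S) : c • x ∈ S := by
  rw [← hS.2] at hx ⊢
  exact Set.smul_mem_centralizer c hx

lemma IsVN.sub_mem_s8 (hS : IsVN S) {x y : Op H} (hx : x ∈ S) (hy : y ∈ S) : x - y ∈ S := by
  have : x - y = x + (-1 : ℂ) • y := by
    rw [neg_one_smul]; abel
  rw [this]
  exact hS.add_mem hx (hS.smul_mem _ hy)

end VN

/-! ### Completely positive unital normal maps are star preserving and contractive -/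

section CP

variable {H : Type u} [NormedAddCommGroup H] [InnerProductSpace ℂ H] [CompleteSpace H]
variable {S : Set (Op H)} {τ : Op H → Op H}

lemma cp_pair (hcp : IsCPMap S τ) {a b : Op H} (ha : a ∈ S) (hb : b ∈ S) (u v : H) :
    0 ≤ ⟪u, τ (star a * a) u⟫ + ⟪u, τ (star a * b) v⟫
      + ⟪v, τ (star b * a) u⟫ + ⟪v, τ (star b * b) v⟫ := by
  have h := hcp 2 ![a, b] ![u, v] (by
    intro i
    fin_cases i <;> simpa)
  simpa [Fin.sum_univ_two, add_assoc] using h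

lemma cp_single (hcp : IsCPMap S τ) {a : Op H} (ha : a ∈ S) (v : H) :
    0 ≤ ⟪v, τ (star a * a) v⟫ := by
  have h := hcp 1 ![a] ![v] (by intro i; fin_cases i <;> simpa)
  simpa [Fin.sum_univ_one] using h

/-- Star preservation (pointwise form): `⟪v, τ(a*) u⟫ = conj ⟪u, τ(a) v⟫`. -/
lemma cp_conj (hone : (1 : Op H) ∈ S) (hcp : IsCPMap S τ)
    {a : Op H} (ha : a ∈ S) (u v : H) :
    ⟪v, τ (star a) u⟫ = starRingEnd ℂ ⟪u, τ a v⟫ := by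
  have key : ∀ μ : ℂ, 0 ≤ ⟪u, τ 1 u⟫ + μ * ⟪u, τ a v⟫
      + starRingEnd ℂ μ * ⟪v, τ (star a) u⟫
      + starRingEnd ℂ μ * μ * ⟪v, τ (star a * a) v⟫ := by
    intro μ
    have h := cp_pair hcp hone ha u (μ • v)
    simpa [inner_smul_left, inner_smul_right, mul_comm, mul_assoc, mul_left_comm]
      using h
  set r0 := ⟪u, τ 1 u⟫ with hr0
  set z := ⟪u, τ a v⟫ with hz
  set w := ⟪v, τ (star a) u⟫ with hw
  set r1 := ⟪v, τ (star a * a) v⟫ with hr1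
  have h1 := (Complex.le_def.mp (key 1)).2
  have h2 := (Complex.le_def.mp (key (-1))).2
  have h3 := (Complex.le_def.mp (key Complex.I)).2
  have h4 := (Complex.le_def.mp (key (-Complex.I))).2
  simp only [map_one, map_neg, Complex.conj_I, one_mul, neg_one_mul, neg_mul, neg_neg,
    mul_one, Complex.add_im, Complex.neg_im, Complex.mul_im, Complex.I_re, Complex.I_im,
    Complex.zero_im, Complex.I_mul_I, map_ofNat] at h1 h2 h3 h4
  apply Complex.ext <;>
    simp only [Complex.conj_re, Complex.conj_im] <;> linarith

/-- Star preservation (operator form). -/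
lemma cp_star_op (hone : (1 : Op H) ∈ S) (hcp : IsCPMap S τ)
    {a : Op H} (ha : a ∈ S) : τ (star a) = star (τ a) := by
  ext u
  apply ext_inner_left ℂ
  intro v
  rw [cp_conj hone hcp ha u v, ContinuousLinearMap.star_eq_adjoint,
    ContinuousLinearMap.adjoint_inner_right]
  exact inner_conj_symm ((τ a) v) u

/-- Normality bound: `|⟪v, τ(b) v⟫| ≤ ‖b‖ ‖v‖²`. -/
lemma cp_normal_bound (hnor : IsNormalMap S τ) {b : Op H} (hb : b ∈ S) (v : H) :
    ‖⟪v, τ b v⟫‖ ≤ ‖b‖ * ‖v‖ ^ 2 := by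
  rcases eq_or_ne v 0 with rfl | hv
  · simp
  · have hnv : ‖v‖ ≠ 0 := norm_ne_zero_iff.mpr hv
    set u : H := (‖v‖ : ℂ)⁻¹ • v with hu
    have hu1 : ‖u‖ = 1 := by
      rw [hu, norm_smul]
      simp [norm_inv, hnv]
    set ω : NormalState H := ⟨fun n => if n = 0 then u else 0, by
      rw [tsum_eq_single 0 (fun n hn => by simp [hn])]
      simp [hu1]⟩ with hω
    obtain ⟨ω', hω'⟩ := hnor ω
    have happ : ω.apply (τ b) = ⟪u, τ b u⟫ := by
      rw [NormalState.apply]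
      rw [tsum_eq_single 0 (fun n hn => by simp [hω, hn])]
      simp [hω]
    have hb1 : ‖⟪u, τ b u⟫‖ ≤ ‖b‖ := by
      rw [← happ, hω' b hb]
      exact ω'.apply_norm_le b
    have hvu : v = (‖v‖ : ℂ) • u := by
      rw [hu, smul_smul]
      rw [mul_inv_cancel₀ (by exact_mod_cast hnv), one_smul]
    have hkey : ⟪v, τ b v⟫ = (‖v‖ : ℂ) ^ 2 * ⟪u, τ b u⟫ := by
      conv_lhs => rw [hvu]
      rw [inner_smul_left, map_smul, inner_smul_right, Complex.conj_ofReal]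
      ring
    rw [hkey]
    rw [norm_mul]
    have : ‖((‖v‖ : ℂ)) ^ 2‖ = ‖v‖ ^ 2 := by
      rw [norm_pow, Complex.norm_real, Real.norm_eq_abs, abs_norm]
    rw [this]
    calc ‖v‖ ^ 2 * ‖⟪u, τ b u⟫‖ ≤ ‖v‖ ^ 2 * ‖b‖ :=
          mul_le_mul_of_nonneg_left hb1 (by positivity)
      _ = ‖b‖ * ‖v‖ ^ 2 := by ring

lemma quad_ineq {A R : ℝ} (hA : 0 ≤ A) (hR : 0 ≤ R) {z : ℂ}
    (P : ∀ c d : ℂ, 0 ≤ starRingEnd ℂ c * c * (A : ℂ) + starRingEnd ℂ c * d * z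
        + starRingEnd ℂ d * c * starRingEnd ℂ z + starRingEnd ℂ d * d * (R : ℂ)) :
    ‖z‖ ^ 2 ≤ A * R := by
  rcases eq_or_ne z 0 with rfl | hz
  · simpa using mul_nonneg hA hR
  · have hz2 : (0 : ℝ) < ‖z‖ ^ 2 := pow_pos (norm_pos_iff.mpr hz) 2
    have hzz : z * starRingEnd ℂ z = ((‖z‖ : ℝ) : ℂ) ^ 2 := Complex.mul_conj' z
    have key : ∀ t : ℝ, 0 ≤ (t ^ 2 * A - 2 * t) * ‖z‖ ^ 2 + R := by
      intro t
      have h := P ((t : ℂ) * z) (-1)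
      have e : starRingEnd ℂ ((t : ℂ) * z) * ((t : ℂ) * z) * (A : ℂ)
          + starRingEnd ℂ ((t : ℂ) * z) * (-1) * z
          + starRingEnd ℂ (-1 : ℂ) * ((t : ℂ) * z) * starRingEnd ℂ z
          + starRingEnd ℂ (-1 : ℂ) * (-1) * (R : ℂ)
          = (((t ^ 2 * A - 2 * t) * ‖z‖ ^ 2 + R : ℝ) : ℂ) := by
        simp only [map_mul, Complex.conj_ofReal, map_neg, map_one]
        push_cast
        linear_combination ((t : ℂ) ^ 2 * (A : ℂ) - 2 * (t : ℂ)) * hzz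
      rw [e] at h
      exact_mod_cast h
    rcases eq_or_lt_of_le hA with hA0 | hApos
    · exfalso
      have h := key ((R + 1) / (2 * ‖z‖ ^ 2))
      rw [← hA0] at h
      have h2 : (R + 1) / (2 * ‖z‖ ^ 2) * (2 * ‖z‖ ^ 2) = R + 1 :=
        div_mul_cancel₀ _ (by positivity)
      nlinarith
    · have h := key A⁻¹
      have hAA : A⁻¹ * A = 1 := inv_mul_cancel₀ (ne_of_gt hApos)
      have h3 : (A⁻¹ ^ 2 * A - 2 * A⁻¹) = -A⁻¹ := by
        field_simp
        ring
      rw [h3] at h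
      have h4 : ‖z‖ ^ 2 * A⁻¹ ≤ R := by linarith
      calc ‖z‖ ^ 2 = (‖z‖ ^ 2 * A⁻¹) * A := by
            rw [mul_assoc, hAA, mul_one]
        _ ≤ R * A := mul_le_mul_of_nonneg_right h4 hA
        _ = A * R := by ring

/-- Cauchy-Schwarz for unital CP maps. -/
lemma cp_cs (hone : (1 : Op H) ∈ S) (huni : τ 1 = 1) (hcp : IsCPMap S τ)
    {a : Op H} (ha : a ∈ S) (u v : H) :
    ‖⟪u, τ a v⟫‖ ^ 2 ≤ ‖u‖ ^ 2 * (⟪v, τ (star a * a) v⟫).re := by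
  set z := ⟪u, τ a v⟫ with hzdef
  set r1c := ⟪v, τ (star a * a) v⟫ with hr1
  have hr1pos : 0 ≤ r1c := cp_single hcp ha v
  have hr1re : 0 ≤ r1c.re := (Complex.le_def.mp hr1pos).1
  have hr1im : r1c.im = 0 := ((Complex.le_def.mp hr1pos).2).symm
  have hRc : r1c = ((r1c.re : ℝ) : ℂ) := by
    apply Complex.ext
    · simp
    · simp [hr1im]
  have hconj : ∀ u' v' : H, ⟪v', τ (star a) u'⟫ = starRingEnd ℂ ⟪u', τ a v'⟫ :=
    fun u' v' => cp_conj hone hcp ha u' v'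
  apply quad_ineq (by positivity) hr1re
  intro c d
  have h := cp_pair hcp hone ha (c • u) (d • v)
  have h1 : star (1 : Op H) * 1 = 1 := by simp
  have h2 : star (1 : Op H) * a = a := by simp
  have h3 : star a * (1 : Op H) = star a := by simp
  rw [h1, h2, h3, huni] at h
  have e1 : ⟪c • u, (1 : Op H) (c • u)⟫
      = starRingEnd ℂ c * c * ((‖u‖ ^ 2 : ℝ) : ℂ) := by
    rw [ContinuousLinearMap.one_apply, inner_smul_left, inner_smul_right,
      inner_self_eq_norm_sq_to_K]
    simp only [rclike_coe]
    push_cast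
    ring
  have e2 : ⟪c • u, τ a (d • v)⟫ = starRingEnd ℂ c * d * z := by
    rw [inner_smul_left, map_smul, inner_smul_right, ← hzdef]
    ring
  have e3 : ⟪d • v, τ (star a) (c • u)⟫ = starRingEnd ℂ d * c * starRingEnd ℂ z := by
    rw [inner_smul_left, map_smul, inner_smul_right, hconj u v, ← hzdef]
    ring
  have e4 : ⟪d • v, τ (star a * a) (d • v)⟫
      = starRingEnd ℂ d * d * ((r1c.re : ℝ) : ℂ) := by
    rw [inner_smul_left, map_smul, inner_smul_right, ← hr1]
    conv_lhs => rw [hRc]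
    ring
  rw [e1, e2, e3, e4] at h
  exact h

/-- Unital CP normal maps are contractive on `S`. -/
lemma cp_contract (hone : (1 : Op H) ∈ S) (hS : IsVN S) (huni : τ 1 = 1)
    (hcp : IsCPMap S τ) (hnor : IsNormalMap S τ) {a : Op H} (ha : a ∈ S) :
    ‖τ a‖ ≤ ‖a‖ := by
  apply ContinuousLinearMap.opNorm_le_bound _ (norm_nonneg a)
  intro v
  have hsa : star a * a ∈ S := hS.mul_mem_s8 (hS.star_mem ha) ha
  have hcs := cp_cs hone huni hcp ha (τ a v) v
  have hnb : (⟪v, τ (star a * a) v⟫).re ≤ ‖a‖ ^ 2 * ‖v‖ ^ 2 := by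
    calc (⟪v, τ (star a * a) v⟫).re ≤ ‖⟪v, τ (star a * a) v⟫‖ := Complex.re_le_norm _
      _ ≤ ‖star a * a‖ * ‖v‖ ^ 2 := cp_normal_bound hnor hsa v
      _ ≤ (‖star a‖ * ‖a‖) * ‖v‖ ^ 2 := by
          apply mul_le_mul_of_nonneg_right (norm_mul_le _ _) (by positivity)
      _ = ‖a‖ ^ 2 * ‖v‖ ^ 2 := by rw [norm_star]; ring
  have hself : ⟪τ a v, τ a v⟫ = ((‖τ a v‖ ^ 2 : ℝ) : ℂ) := by
    rw [inner_self_eq_norm_sq_to_K]; simp only [rclike_coe]; push_cast; ring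
  have hnorm : ‖⟪τ a v, τ a v⟫‖ = ‖τ a v‖ ^ 2 := by
    rw [hself, Complex.norm_real, Real.norm_eq_abs, abs_of_nonneg (by positivity)]
  rw [hnorm] at hcs
  -- hcs : (‖τ a v‖^2)^2 ≤ ‖τ a v‖^2 * re(...) ≤ ‖τ a v‖^2 * ‖a‖^2 ‖v‖^2
  have hfin : (‖τ a v‖ ^ 2) ^ 2 ≤ ‖τ a v‖ ^ 2 * (‖a‖ ^ 2 * ‖v‖ ^ 2) := by
    calc (‖τ a v‖ ^ 2) ^ 2 ≤ ‖τ a v‖ ^ 2 * (⟪v, τ (star a * a) v⟫).re := hcs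
      _ ≤ ‖τ a v‖ ^ 2 * (‖a‖ ^ 2 * ‖v‖ ^ 2) := by
          apply mul_le_mul_of_nonneg_left hnb (by positivity)
  rcases eq_or_lt_of_le (norm_nonneg (τ a v)) with h0 | hpos
  · rw [← h0]; positivity
  · have hsq : ‖τ a v‖ ^ 2 ≤ (‖a‖ * ‖v‖) ^ 2 := by
      nlinarith [mul_pos hpos hpos]
    nlinarith [hsq, norm_nonneg (τ a v), mul_nonneg (norm_nonneg a) (norm_nonneg v)]

end CP


/-! ### Density of the functionals `x ↦ φ(c x)` among normal states -/

section Density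

variable {H : Type u} [NormedAddCommGroup H] [InnerProductSpace ℂ H] [CompleteSpace H]

/-- `lp.single` as a continuous linear map. -/
def lpsingle (m : ℕ) : H →L[ℂ] K2 H :=
  LinearMap.mkContinuous
    { toFun := fun v => lp.single 2 m v
      map_add' := fun v w => by
        apply lp.ext; funext n
        rcases eq_or_ne n m with rfl | hn
        · simp [lp.single_apply_self, lp.coeFn_add]
        · simp [lp.single_apply_ne _ _ _ hn, lp.coeFn_add]
      map_smul' := fun c v => by simpa using lp.single_smul 2 m v c }
    1 (fun v => by
      rw [one_mul]
      exact le_of_eq (lp.norm_single (E := fun _ : ℕ => H) (p := 2) (by norm_num) m v))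

@[simp] lemma lpsingle_apply (m : ℕ) (v : H) : lpsingle m v = lp.single 2 m v := by rfl

/-- Coordinate evaluation as a continuous linear map. -/
def lpeval (m : ℕ) : K2 H →L[ℂ] H :=
  LinearMap.mkContinuous
    { toFun := fun f => f m
      map_add' := fun f g => congrFun (lp.coeFn_add f g) m
      map_smul' := fun c f => congrFun (lp.coeFn_smul c f) m }
    1 (fun f => by
      rw [one_mul]
      exact lp.norm_apply_le_norm (by norm_num) f m)

@[simp] lemma lpeval_apply (m : ℕ) (f : K2 H) : lpeval m f = f m := rfl

lemma diag_injective {a b : Op H} (h : diag a = diag b) : a = b := by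
  ext v
  have := congrArg (fun T : Op (K2 H) => (T (lp.single 2 0 v)) 0) h
  simpa [lp.single_apply_self] using this

/-- An operator leaving a closed submodule and its star-image invariant commutes
with the orthogonal projection. -/
lemma proj_comm (W : Submodule ℂ (K2 H)) [CompleteSpace W]
    (B : Op (K2 H)) (hB : ∀ w ∈ W, B w ∈ W) (hBs : ∀ w ∈ W, (star B) w ∈ W) (f : K2 H) :
    (Submodule.orthogonalProjectionOnto W (B f) : K2 H) = B (Submodule.orthogonalProjectionOnto W f) := by
  have hdecomp : B f = B (Submodule.orthogonalProjectionOnto W f : K2 H)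
      + B (f - (Submodule.orthogonalProjectionOnto W f : K2 H)) := by
    rw [← map_add]
    congr 1
    abel
  rw [hdecomp, map_add]
  have h1 : (Submodule.orthogonalProjectionOnto W (B (Submodule.orthogonalProjectionOnto W f : K2 H)) : K2 H)
      = B (Submodule.orthogonalProjectionOnto W f : K2 H) :=
    Submodule.starProjection_eq_self_iff.mpr (hB _ (by exact Submodule.coe_mem _))
  have h2 : Submodule.orthogonalProjectionOnto W (B (f - (Submodule.orthogonalProjectionOnto W f : K2 H))) = 0 := by
    apply Submodule.orthogonalProjectionOnto_apply_of_mem_orthogonal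
    rw [Submodule.mem_orthogonal]
    intro u hu
    have hmem : f - (Submodule.orthogonalProjectionOnto W f : K2 H) ∈ Wᗮ :=
      Submodule.sub_starProjection_mem_orthogonal f
    calc ⟪u, B (f - (Submodule.orthogonalProjectionOnto W f : K2 H))⟫
        = ⟪(star B) u, f - (Submodule.orthogonalProjectionOnto W f : K2 H)⟫ := by
          rw [ContinuousLinearMap.star_eq_adjoint, ContinuousLinearMap.adjoint_inner_left]
      _ = 0 := (Submodule.mem_orthogonal _ _).mp hmem _ (hBs u hu)
  rw [Submodule.coe_add, h2, h1]
  simp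

set_option maxHeartbeats 2000000 in
/-- Core density theorem: every normal state is approximated, uniformly on the unit
ball of `S`, by functionals `x ↦ φ(c x)` with `c ∈ S`. -/
theorem state_approx {S : Set (Op H)} (hS : IsVN S) (hone : (1 : Op H) ∈ S)
    (φ : NormalState H) (hfaith : FaithfulOn φ S) (ω : NormalState H)
    {ε : ℝ} (hε : 0 < ε) :
    ∃ c ∈ S, ∀ x ∈ S, ‖x‖ ≤ 1 → ‖ω.apply x - φ.apply (c * x)‖ ≤ ε := by
  classical
  set Ξ : K2 H := φ.vec with hΞ
  set Θ : K2 H := ω.vec with hΘ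
  set Cs : Set (Op (K2 H)) := {B | ∀ x ∈ S, B * diag x = diag x * B} with hCs
  have hCone : (1 : Op (K2 H)) ∈ Cs := fun x _ => by rw [one_mul, mul_one]
  have hCmul : ∀ B ∈ Cs, ∀ B' ∈ Cs, B * B' ∈ Cs := by
    intro B hB B' hB' x hx
    rw [mul_assoc, hB' x hx, ← mul_assoc, hB x hx, mul_assoc]
  have hCstar : ∀ B ∈ Cs, star B ∈ Cs := by
    intro B hB x hx
    have h := hB (star x) (hS.star_mem hx)
    have h2 := congrArg star h
    rw [star_mul, star_mul, diag_star, star_star] at h2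
    exact h2.symm
  -- the submodule Cs • Ξ
  set V0 : Submodule ℂ (K2 H) :=
    { carrier := {w | ∃ B ∈ Cs, B Ξ = w}
      add_mem' := by
        rintro w₁ w₂ ⟨B₁, hB₁, rfl⟩ ⟨B₂, hB₂, rfl⟩
        exact ⟨B₁ + B₂, fun x hx => by
          rw [add_mul, mul_add, hB₁ x hx, hB₂ x hx], rfl⟩
      zero_mem' := ⟨0, fun x hx => by rw [zero_mul, mul_zero], rfl⟩
      smul_mem' := by
        rintro c w ⟨B, hB, rfl⟩
        exact ⟨c • B, fun x hx => by
          rw [smul_mul_assoc, mul_smul_comm, hB x hx], rfl⟩ } with hV0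
  set V : Submodule ℂ (K2 H) := V0.topologicalClosure with hV
  haveI : CompleteSpace V := (Submodule.isClosed_topologicalClosure V0).completeSpace_coe
  have hVinv : ∀ B ∈ Cs, ∀ w ∈ V, B w ∈ V := by
    intro B hB w hw
    have hmaps : Set.MapsTo B (V0 : Set (K2 H)) (V0 : Set (K2 H)) := by
      rintro w' ⟨B', hB', rfl⟩
      exact ⟨B * B', hCmul B hB B' hB', by rw [ContinuousLinearMap.mul_apply]⟩
    have hw' : w ∈ closure (V0 : Set (K2 H)) := by
      have h : w ∈ (V : Set (K2 H)) := hw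
      rwa [hV, Submodule.topologicalClosure_coe] at h
    have hBw := map_mem_closure B.continuous hw' hmaps
    show B w ∈ (V : Set (K2 H))
    rw [hV, Submodule.topologicalClosure_coe]
    exact hBw
  -- the projection onto V commutes with every element of Cs
  have hPcomm : ∀ B ∈ Cs, ∀ f : K2 H,
      (Submodule.orthogonalProjectionOnto V (B f) : K2 H) = B (Submodule.orthogonalProjectionOnto V f) := by
    intro B hB f
    exact proj_comm V B (fun w hw => hVinv B hB w hw)
      (fun w hw => hVinv (star B) (hCstar B hB) w hw) f
  set POp : Op (K2 H) := V.subtypeL.comp (Submodule.orthogonalProjectionOnto V) with hPOp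
  have hPOp_apply : ∀ f, POp f = (Submodule.orthogonalProjectionOnto V f : K2 H) := fun f => rfl
  have hPsym : ∀ f g : K2 H, ⟪POp f, g⟫ = ⟪f, POp g⟫ := fun f g =>
    Submodule.inner_starProjection_left_eq_right V f g
  -- shift operators belong to Cs
  have hUmem : ∀ m : ℕ, ((lpsingle m).comp (lpeval 0) : Op (K2 H)) ∈ Cs := by
    intro m x hx
    ext f : 1
    apply lp.ext; funext n
    show (lp.single 2 m (x (f 0)) : K2 H) n = (diag x (lp.single 2 m (f 0))) n
    rcases eq_or_ne n m with rfl | hn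
    · simp [lp.single_apply_self]
    · simp [lp.single_apply_ne _ _ _ hn, Pi.single_eq_of_ne hn]
  set q' : Op H := (lpeval 0).comp (POp.comp (lpsingle 0)) with hq'
  have hPsingle : ∀ (m : ℕ) (u : H), POp (lp.single 2 m u) = lp.single 2 m (q' u) := by
    intro m u
    have h0 : (lp.single 2 m u : K2 H)
        = ((lpsingle m).comp (lpeval 0)) (lp.single 2 0 u) := by
      show (lp.single 2 m u : K2 H) = lp.single 2 m ((lp.single 2 0 u : K2 H) 0)
      rw [lp.single_apply_self]
    rw [hPOp_apply, h0, hPcomm _ (hUmem m)]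
    show (lp.single 2 m ((Submodule.orthogonalProjectionOnto V (lp.single 2 0 u) : K2 H) 0) : K2 H) = _
    rfl
  -- the projection is diagonal
  set q : Op H := star q' with hq
  have hPdiag : POp = diag q := by
    ext f : 1
    apply lp.ext; funext n
    apply ext_inner_left ℂ
    intro u
    have e1 : ⟪u, (POp f) n⟫ = ⟪(lp.single 2 n u : K2 H), POp f⟫ :=
      (lp.inner_single_left n u (POp f)).symm
    have e2 : ⟪(lp.single 2 n u : K2 H), POp f⟫ = ⟪POp (lp.single 2 n u), f⟫ := by
      rw [hPsym]
    have e3 : ⟪POp (lp.single 2 n u), f⟫ = ⟪(lp.single 2 n (q' u) : K2 H), f⟫ := by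
      rw [hPsingle]
    have e4 : ⟪(lp.single 2 n (q' u) : K2 H), f⟫ = ⟪q' u, f n⟫ :=
      lp.inner_single_left n (q' u) f
    have e5 : ⟪q' u, f n⟫ = ⟪u, q (f n)⟫ := by
      rw [hq, ContinuousLinearMap.star_eq_adjoint, ContinuousLinearMap.adjoint_inner_right]
    rw [e1, e2, e3, e4, e5]
    rfl
  -- q belongs to S
  have hqS : q ∈ S := by
    have hcent : q ∈ Set.centralizer (Set.centralizer S) := by
      intro z hz
      have hzC : diag z ∈ Cs := by
        intro x hx
        rw [← diag_mul, ← diag_mul, hz x hx]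
      have hcomm : diag z * POp = POp * diag z := by
        ext f : 1
        show diag z (POp f) = POp (diag z f)
        rw [hPOp_apply, hPOp_apply, hPcomm _ hzC]
      rw [hPdiag, ← diag_mul, ← diag_mul] at hcomm
      exact diag_injective hcomm
    have : bicomm S = S := hS.2
    rw [← this]
    exact hcent
  -- P Ξ = Ξ, hence by faithfulness q = 1 and V is everything
  have hXiV : Ξ ∈ V := Submodule.le_topologicalClosure V0 ⟨1, hCone, by simp⟩
  have hPXi : POp Ξ = Ξ := by
    rw [hPOp_apply]
    exact Submodule.starProjection_eq_self_iff.mpr hXiV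
  have hdiagXi : diag (1 - q) Ξ = 0 := by
    rw [diag_sub, diag_one, ContinuousLinearMap.sub_apply, ContinuousLinearMap.one_apply,
      ← hPdiag, hPXi, sub_self]
  have hq1 : q = 1 := by
    have hmem : (1 : Op H) - q ∈ S := hS.sub_mem_s8 hone hqS
    have hzero : φ.apply (star (1 - q) * (1 - q)) = 0 := by
      rw [NormalState.apply_mul, star_star]
      show ⟪diag (1 - q) Ξ, diag (1 - q) Ξ⟫ = 0
      rw [hdiagXi, inner_zero_left]
    have := hfaith _ hmem hzero
    have h10 : (1 : Op H) - q = 0 := this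
    rw [sub_eq_zero] at h10
    exact h10.symm
  have hPid : ∀ f : K2 H, POp f = f := by
    intro f
    rw [hPdiag, hq1, diag_one, ContinuousLinearMap.one_apply]
  -- hence Θ lies in the closure of Cs • Ξ
  have hΘV : Θ ∈ closure (V0 : Set (K2 H)) := by
    rw [← Submodule.topologicalClosure_coe]
    have : POp Θ ∈ V := by
      rw [hPOp_apply]; exact Submodule.coe_mem _
    rwa [hPid Θ] at this
  -- the submodule diag S • Ξ
  set W0 : Submodule ℂ (K2 H) :=
    { carrier := {w | ∃ a ∈ S, diag a Ξ = w}
      add_mem' := by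
        rintro w₁ w₂ ⟨a₁, ha₁, rfl⟩ ⟨a₂, ha₂, rfl⟩
        exact ⟨a₁ + a₂, hS.add_mem ha₁ ha₂, by rw [diag_add]; rfl⟩
      zero_mem' := ⟨0, by simpa using hS.smul_mem 0 hone, by
        have : diag (0 : Op H) = 0 := by
          ext f : 1; apply lp.ext; funext n; simp
        rw [this]; rfl⟩
      smul_mem' := by
        rintro c w ⟨a, ha, rfl⟩
        exact ⟨c • a, hS.smul_mem c ha, by rw [diag_smul]; rfl⟩ } with hW0
  set W : Submodule ℂ (K2 H) := W0.topologicalClosure with hW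
  haveI : CompleteSpace W := (Submodule.isClosed_topologicalClosure W0).completeSpace_coe
  set QOp : Op (K2 H) := W.subtypeL.comp (Submodule.orthogonalProjectionOnto W) with hQOp
  have hQsym : ∀ f g : K2 H, ⟪QOp f, g⟫ = ⟪f, QOp g⟫ := fun f g =>
    Submodule.inner_starProjection_left_eq_right W f g
  have hQfix : ∀ x ∈ S, QOp (diag x Ξ) = diag x Ξ := by
    intro x hx
    show (Submodule.orthogonalProjectionOnto W (diag x Ξ) : K2 H) = diag x Ξ
    exact Submodule.starProjection_eq_self_iff.mpr
      (Submodule.le_topologicalClosure W0 ⟨x, hx, rfl⟩)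
  -- choose the approximants
  set ε₁ : ℝ := min (ε / 4) 1 with hε₁
  have hε₁pos : 0 < ε₁ := lt_min (by linarith) one_pos
  have hε₁le : ε₁ ≤ ε / 4 := min_le_left _ _
  have hε₁1 : ε₁ ≤ 1 := min_le_right _ _
  obtain ⟨w₁, hw₁V0, hw₁close⟩ := Metric.mem_closure_iff.mp hΘV ε₁ hε₁pos
  obtain ⟨B, hBC, rfl⟩ := hw₁V0
  set ζ : K2 H := (star B) (B Ξ) with hζ
  have hQζ : QOp ζ ∈ closure (W0 : Set (K2 H)) := by
    rw [← Submodule.topologicalClosure_coe]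
    show (Submodule.orthogonalProjectionOnto W ζ : K2 H) ∈ W
    exact Submodule.coe_mem _
  obtain ⟨w₂, hw₂W0, hw₂close⟩ := Metric.mem_closure_iff.mp hQζ ε₁ hε₁pos
  obtain ⟨a, haS, rfl⟩ := hw₂W0
  refine ⟨star a, hS.star_mem haS, ?_⟩
  intro x hx hx1
  -- now the estimates
  have hΘnorm : ‖Θ‖ = 1 := ω.norm_vec
  have hΞnorm : ‖Ξ‖ = 1 := φ.norm_vec
  have hd1 : ‖Θ - B Ξ‖ ≤ ε₁ := by
    rw [← dist_eq_norm]
    exact le_of_lt hw₁close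
  have hBΞnorm : ‖B Ξ‖ ≤ 1 + ε₁ := by
    calc ‖B Ξ‖ = ‖Θ - (Θ - B Ξ)‖ := by congr 1; abel
      _ ≤ ‖Θ‖ + ‖Θ - B Ξ‖ := norm_sub_le _ _
      _ ≤ 1 + ε₁ := by rw [hΘnorm]; exact add_le_add_right hd1 1
  have hdxnorm : ∀ g : K2 H, ‖diag x g‖ ≤ ‖g‖ := by
    intro g
    calc ‖diag x g‖ ≤ ‖x‖ * ‖g‖ := norm_diag_apply_le x g
      _ ≤ 1 * ‖g‖ := mul_le_mul_of_nonneg_right hx1 (norm_nonneg g)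
      _ = ‖g‖ := one_mul _
  -- step 1 : ω(x) close to ⟪BΞ, diag x BΞ⟫
  have hbΘ : ‖diag x Θ‖ ≤ 1 := by
    calc ‖diag x Θ‖ ≤ ‖Θ‖ := hdxnorm Θ
      _ = 1 := hΘnorm
  have hdΘB : ‖diag x (Θ - B Ξ)‖ ≤ ε₁ := by
    calc ‖diag x (Θ - B Ξ)‖ ≤ ‖Θ - B Ξ‖ := hdxnorm _
      _ ≤ ε₁ := hd1
  have step1 : ‖ω.apply x - ⟪B Ξ, diag x (B Ξ)⟫‖ ≤ ε₁ * (2 + ε₁) := by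
    have hid : ω.apply x - ⟪B Ξ, diag x (B Ξ)⟫
        = ⟪Θ - B Ξ, diag x Θ⟫ + ⟪B Ξ, diag x (Θ - B Ξ)⟫ := by
      rw [ω.apply_eq, ← hΘ]
      rw [inner_sub_left, map_sub, inner_sub_right]
      ring
    rw [hid]
    calc ‖⟪Θ - B Ξ, diag x Θ⟫ + ⟪B Ξ, diag x (Θ - B Ξ)⟫‖
        ≤ ‖⟪Θ - B Ξ, diag x Θ⟫‖ + ‖⟪B Ξ, diag x (Θ - B Ξ)⟫‖ := norm_add_le _ _
      _ ≤ ‖Θ - B Ξ‖ * ‖diag x Θ‖ + ‖B Ξ‖ * ‖diag x (Θ - B Ξ)‖ := by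
          gcongr <;> exact norm_inner_le_norm _ _
      _ ≤ ε₁ * 1 + (1 + ε₁) * ε₁ :=
          add_le_add (mul_le_mul hd1 hbΘ (norm_nonneg _) (le_of_lt hε₁pos))
            (mul_le_mul hBΞnorm hdΘB (norm_nonneg _) (by linarith))
      _ = ε₁ * (2 + ε₁) := by ring
  -- step 2 : ⟪BΞ, diag x BΞ⟫ = ⟪ζ, diag x Ξ⟫ = ⟪QOp ζ, diag x Ξ⟫
  have step2 : ⟪B Ξ, diag x (B Ξ)⟫ = ⟪QOp ζ, diag x Ξ⟫ := by
    have hxB : diag x (B Ξ) = B (diag x Ξ) := by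
      have := hBC x hx
      calc diag x (B Ξ) = (diag x * B) Ξ := rfl
        _ = (B * diag x) Ξ := by rw [this]
        _ = B (diag x Ξ) := rfl
    calc ⟪B Ξ, diag x (B Ξ)⟫ = ⟪B Ξ, B (diag x Ξ)⟫ := by rw [hxB]
      _ = ⟪(star B) (B Ξ), diag x Ξ⟫ := by
          rw [ContinuousLinearMap.star_eq_adjoint, ContinuousLinearMap.adjoint_inner_left]
      _ = ⟪ζ, QOp (diag x Ξ)⟫ := by rw [hζ, hQfix x hx]
      _ = ⟪QOp ζ, diag x Ξ⟫ := (hQsym ζ (diag x Ξ)).symm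
  -- step 3 : ⟪QOp ζ, diag x Ξ⟫ close to φ(star a * x)
  have step3 : ‖⟪QOp ζ, diag x Ξ⟫ - φ.apply (star a * x)‖ ≤ ε₁ := by
    have happ : φ.apply (star a * x) = ⟪diag a Ξ, diag x Ξ⟫ := by
      rw [NormalState.apply_mul, star_star]
    rw [happ, ← inner_sub_left]
    calc ‖⟪QOp ζ - diag a Ξ, diag x Ξ⟫‖ ≤ ‖QOp ζ - diag a Ξ‖ * ‖diag x Ξ‖ :=
          norm_inner_le_norm _ _
      _ ≤ ε₁ * 1 := by
          gcongr
          · rw [← dist_eq_norm]; exact le_of_lt hw₂close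
          · calc ‖diag x Ξ‖ ≤ ‖Ξ‖ := hdxnorm Ξ
              _ = 1 := hΞnorm
      _ = ε₁ := mul_one _
  -- assemble
  have step1' : ‖ω.apply x - ⟪QOp ζ, diag x Ξ⟫‖ ≤ ε₁ * (2 + ε₁) := by
    rw [← step2]; exact step1
  calc ‖ω.apply x - φ.apply (star a * x)‖
      = ‖(ω.apply x - ⟪QOp ζ, diag x Ξ⟫)
        + (⟪QOp ζ, diag x Ξ⟫ - φ.apply (star a * x))‖ := by
        congr 1; ring
    _ ≤ ‖ω.apply x - ⟪QOp ζ, diag x Ξ⟫‖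
        + ‖⟪QOp ζ, diag x Ξ⟫ - φ.apply (star a * x)‖ := norm_add_le _ _
    _ ≤ ε₁ * (2 + ε₁) + ε₁ := add_le_add step1' step3
    _ ≤ ε₁ * (2 + 1) + ε₁ := by nlinarith
    _ = 4 * ε₁ := by ring
    _ ≤ 4 * (ε / 4) := by linarith
    _ = ε := by ring

end Density


/-! ### Quantitative consequences of the Kolmogorov property -/

section Main

variable {H : Type u} [NormedAddCommGroup H] [InnerProductSpace ℂ H] [CompleteSpace H]

/-- L²(φ) convergence: uniform estimate for `φ(c τ_t(x)) − φ(c)φ(x)` from the Kolmogorov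
property of the adjoint semigroup. -/
lemma stepA {S : Set (Op H)} (hS : IsVN S) (hone : (1 : Op H) ∈ S)
    (T : MarkovSemigroup S) (φ : NormalState H) (A : AdjointSemigroup S T φ)
    (hK : ∀ x ∈ S, ∀ y ∈ S,
      Tendsto (fun t => φ.apply (A.tilde.τ t x * A.tilde.τ t y)) atTop
        (𝓝 (φ.apply x * φ.apply y)))
    {c : Op H} (hc : c ∈ S) {ε : ℝ} (hε : 0 < ε) :
    ∃ T₀ : ℝ, 0 ≤ T₀ ∧ ∀ t, T₀ ≤ t → ∀ x ∈ S, ‖x‖ ≤ 1 →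
      ‖φ.apply (c * T.τ t x) - φ.apply c * φ.apply x‖ ≤ ε := by
  have hKc := hK c hc (star c) (hS.star_mem hc)
  obtain ⟨T₁, hT₁⟩ := (Metric.tendsto_atTop.mp hKc) (ε ^ 2) (by positivity)
  refine ⟨max T₁ 0, le_max_right _ _, ?_⟩
  intro t ht x hx hx1
  have ht0 : (0 : ℝ) ≤ t := le_trans (le_max_right _ _) ht
  have ht1 : T₁ ≤ t := le_trans (le_max_left _ _) ht
  set α := φ.apply c with hα
  set u := A.tilde.τ t c with hu
  set v := A.tilde.τ t (star c) with hv
  have huS : u ∈ S := A.tilde.maps t ht0 c hc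
  have hvS : v ∈ S := A.tilde.maps t ht0 (star c) (hS.star_mem hc)
  set d : Op H := u - α • 1 with hd
  -- rewrite the target via the adjoint relation
  have key1 : φ.apply (c * T.τ t x) = φ.apply (u * x) :=
    (A.adjoint_rel t ht0 c hc x hx).symm
  have key2 : φ.apply (u * x) - α * φ.apply x = φ.apply (d * x) := by
    have hdx : d * x = u * x - α • x := by
      rw [hd, sub_mul, smul_mul_assoc, one_mul]
    rw [hdx, φ.apply_subOp, φ.apply_smulOp]
  -- star of d
  have hstard : star d = v - starRingEnd ℂ α • 1 := by
    rw [hd, star_sub, star_smul, star_one, hu, hv,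
      cp_star_op hone (A.tilde.cp t ht0) hc]
    rfl
  -- φ(d d*) = φ(uv) - α conj α
  have hφu : φ.apply u = α := A.inv t ht0 c hc
  have hφv : φ.apply v = starRingEnd ℂ α := by
    rw [hv, A.inv t ht0 (star c) (hS.star_mem hc), φ.apply_star]
  have hdd : d * star d = u * v - starRingEnd ℂ α • u - α • v
      + (α * starRingEnd ℂ α) • (1 : Op H) := by
    rw [hd, hstard]
    simp only [sub_mul, mul_sub, smul_mul_assoc, mul_smul_comm, one_mul, mul_one,
      smul_smul, smul_sub]
    module
  have hφdd : φ.apply (d * star d)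
      = φ.apply (u * v) - α * starRingEnd ℂ α := by
    rw [hdd, φ.apply_addOp, φ.apply_subOp, φ.apply_subOp, φ.apply_smulOp,
      φ.apply_smulOp, φ.apply_smulOp, φ.apply_one_s8, hφu, hφv]
    ring
  -- the L² norm of d
  set Ξ : K2 H := φ.vec with hΞ
  have hdiag : φ.apply (d * star d) = ((‖diag (star d) Ξ‖ ^ 2 : ℝ) : ℂ) := by
    rw [φ.apply_mul]
    rw [inner_self_eq_norm_sq_to_K]
    simp only [rclike_coe]
    push_cast
    ring
  -- distance estimate
  have hdist : ‖φ.apply (u * v) - α * starRingEnd ℂ α‖ < ε ^ 2 := by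
    have h := hT₁ t ht1
    rw [dist_eq_norm, φ.apply_star] at h
    exact h
  have hL2 : ‖diag (star d) Ξ‖ ≤ ε := by
    have h1 : ((‖diag (star d) Ξ‖ ^ 2 : ℝ) : ℂ)
        = φ.apply (u * v) - α * starRingEnd ℂ α := by
      rw [← hdiag, hφdd]
    have h2 : ‖diag (star d) Ξ‖ ^ 2 < ε ^ 2 := by
      have := hdist
      rw [← h1] at this
      rwa [Complex.norm_real, Real.norm_eq_abs, abs_of_nonneg (by positivity)] at this
    nlinarith [norm_nonneg (diag (star d) Ξ)]
  -- Cauchy-Schwarz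
  have hcs : ‖φ.apply (d * x)‖ ≤ ‖diag (star d) Ξ‖ * ‖x‖ := by
    rw [φ.apply_mul]
    calc ‖⟪diag (star d) Ξ, diag x Ξ⟫‖ ≤ ‖diag (star d) Ξ‖ * ‖diag x Ξ‖ :=
          norm_inner_le_norm _ _
      _ ≤ ‖diag (star d) Ξ‖ * (‖x‖ * ‖Ξ‖) := by
          gcongr
          exact norm_diag_apply_le x Ξ
      _ = ‖diag (star d) Ξ‖ * ‖x‖ := by rw [φ.norm_vec, mul_one]
  rw [key1, key2]
  calc ‖φ.apply (d * x)‖ ≤ ‖diag (star d) Ξ‖ * ‖x‖ := hcs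
    _ ≤ ε * 1 := mul_le_mul hL2 hx1 (norm_nonneg x) (le_of_lt hε)
    _ = ε := mul_one ε

/-- Polarization identity. -/
lemma polarize (Aop : Op (K2 H)) (Ξ ζ : K2 H) :
    4 * ⟪ζ, Aop Ξ⟫
      = ⟪Ξ + ζ, Aop (Ξ + ζ)⟫
        + Complex.I * ⟪Ξ + Complex.I • ζ, Aop (Ξ + Complex.I • ζ)⟫
        - ⟪Ξ - ζ, Aop (Ξ - ζ)⟫
        - Complex.I * ⟪Ξ - Complex.I • ζ, Aop (Ξ - Complex.I • ζ)⟫ := by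
  simp only [map_add, map_sub, map_smul, inner_add_left, inner_add_right,
    inner_sub_left, inner_sub_right, inner_smul_left, inner_smul_right, Complex.conj_I]
  linear_combination (2 * ⟪ζ, Aop Ξ⟫ - 2 * ⟪Ξ, Aop ζ⟫) * Complex.I_sq

/-- The uniform estimate from strong ergodicity, in vector form. -/
lemma vec_estimate {S : Set (Op H)} (T : MarkovSemigroup S) (φ : NormalState H)
    (hSE : ∀ ω : NormalState H, ∀ ε : ℝ, 0 < ε → ∃ T₀ : ℝ, ∀ t, T₀ ≤ t →
      ∀ x ∈ S, ‖x‖ ≤ 1 → ‖ω.apply (T.τ t x) - φ.apply x‖ ≤ ε)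
    (v : K2 H) {ε : ℝ} (hε : 0 < ε) :
    ∃ T₀ : ℝ, 0 ≤ T₀ ∧ ∀ t, T₀ ≤ t → ∀ z ∈ S, ‖z‖ ≤ 1 →
      ‖⟪v, diag (T.τ t z) v⟫ - ⟪v, v⟫ * φ.apply z‖ ≤ ε := by
  rcases eq_or_ne v 0 with rfl | hv
  · exact ⟨0, le_refl 0, fun t ht z hz hz1 => by
      simp [inner_zero_left, le_of_lt hε]⟩
  · have hnv : (0 : ℝ) < ‖v‖ := norm_pos_iff.mpr hv
    set u : K2 H := (‖v‖ : ℂ)⁻¹ • v with hu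
    have hu1 : ‖u‖ = 1 := by
      rw [hu, norm_smul, norm_inv, Complex.norm_real, Real.norm_eq_abs, abs_norm,
        inv_mul_cancel₀ (ne_of_gt hnv)]
    obtain ⟨T₀, hT₀⟩ := hSE (vecState u hu1) (ε / ‖v‖ ^ 2) (by positivity)
    refine ⟨max T₀ 0, le_max_right _ _, ?_⟩
    intro t ht z hz hz1
    have ht' : T₀ ≤ t := le_trans (le_max_left _ _) ht
    have happ := hT₀ t ht' z hz hz1
    rw [vecState_apply] at happ
    have hvu : v = (‖v‖ : ℂ) • u := by
      rw [hu, smul_smul, mul_inv_cancel₀ (by exact_mod_cast ne_of_gt hnv), one_smul]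
    have hkey : ⟪v, diag (T.τ t z) v⟫ - ⟪v, v⟫ * φ.apply z
        = ((‖v‖ ^ 2 : ℝ) : ℂ) * (⟪u, diag (T.τ t z) u⟫ - ⟪u, u⟫ * φ.apply z) := by
      conv_lhs => rw [hvu]
      simp only [inner_smul_left, inner_smul_right, map_smul, Complex.conj_ofReal]
      push_cast
      ring
    have huu : ⟪u, u⟫ = (1 : ℂ) := by
      rw [inner_self_eq_norm_sq_to_K, hu1]
      norm_num
    rw [hkey, huu, one_mul]
    rw [norm_mul, Complex.norm_real, Real.norm_eq_abs, abs_of_nonneg (by positivity)]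
    calc ‖v‖ ^ 2 * ‖⟪u, diag (T.τ t z) u⟫ - φ.apply z‖ ≤ ‖v‖ ^ 2 * (ε / ‖v‖ ^ 2) := by
          gcongr
      _ = ε := by field_simp

end Main

/-- Theorem 3.4.  For a Markov semigroup `(A₀,τ_t,φ₀)` with faithful
normal invariant state `φ₀` and adjoint semigroup `(τ̃_t)`, the following are
equivalent: (a) the Kolmogorov property of the adjoint semigroup,
`φ₀(τ̃_t(x)τ̃_t(y)) → φ₀(x)φ₀(y)`; (b) strong ergodicity of `(τ_t)`,
`‖φ ∘ τ_t − φ₀‖ → 0` for every normal state `φ` on `A₀`. -/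
theorem statement8
    {H : Type u} [NormedAddCommGroup H] [InnerProductSpace ℂ H] [CompleteSpace H]
    (S : Set (Op H)) (hS : IsVN S) (hone : (1 : Op H) ∈ S)
    (T : MarkovSemigroup S) (φ : NormalState H)
    (hinv : InvariantState T φ) (hfaith : FaithfulOn φ S)
    (A : AdjointSemigroup S T φ) :
    (∀ x ∈ S, ∀ y ∈ S,
        Tendsto (fun t => φ.apply (A.tilde.τ t x * A.tilde.τ t y)) atTop
          (𝓝 (φ.apply x * φ.apply y))) ↔
      (∀ ω : NormalState H, ∀ ε : ℝ, 0 < ε → ∃ T₀ : ℝ, ∀ t, T₀ ≤ t →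
        ∀ x ∈ S, ‖x‖ ≤ 1 → ‖ω.apply (T.τ t x) - φ.apply x‖ ≤ ε) := by
  constructor
  · -- Kolmogorov property of the adjoint implies strong ergodicity
    intro hK ω ε hε
    have hε3 : 0 < ε / 3 := by linarith
    obtain ⟨c, hcS, hc⟩ := state_approx hS hone φ hfaith ω hε3
    obtain ⟨T₀, hT₀0, hTA⟩ := stepA hS hone T φ A hK hcS hε3
    refine ⟨T₀, ?_⟩
    intro t ht x hx hx1
    have ht0 : (0 : ℝ) ≤ t := le_trans hT₀0 ht
    have hτx : T.τ t x ∈ S := T.maps t ht0 x hx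
    have hτn : ‖T.τ t x‖ ≤ 1 :=
      le_trans (cp_contract hone hS (T.unital t ht0) (T.cp t ht0) (T.normal t ht0) hx) hx1
    have h1 : ‖ω.apply (T.τ t x) - φ.apply (c * T.τ t x)‖ ≤ ε / 3 := hc _ hτx hτn
    have h2 : ‖φ.apply (c * T.τ t x) - φ.apply c * φ.apply x‖ ≤ ε / 3 :=
      hTA t ht x hx hx1
    have hone_n : ‖(1 : Op H)‖ ≤ 1 := by
      rw [ContinuousLinearMap.one_def]
      exact ContinuousLinearMap.norm_id_le
    have hφc : ‖φ.apply c - 1‖ ≤ ε / 3 := by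
      have h := hc 1 hone hone_n
      rw [NormalState.apply_one_s8, mul_one] at h
      calc ‖φ.apply c - 1‖ = ‖(1 : ℂ) - φ.apply c‖ := by rw [norm_sub_rev]
        _ ≤ ε / 3 := h
    have h3 : ‖φ.apply c * φ.apply x - φ.apply x‖ ≤ ε / 3 := by
      have hfac : φ.apply c * φ.apply x - φ.apply x = (φ.apply c - 1) * φ.apply x := by
        ring
      rw [hfac, norm_mul]
      calc ‖φ.apply c - 1‖ * ‖φ.apply x‖ ≤ (ε / 3) * 1 :=
            mul_le_mul hφc (le_trans (φ.apply_norm_le x) hx1) (norm_nonneg _)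
              (by linarith)
        _ = ε / 3 := mul_one _
    calc ‖ω.apply (T.τ t x) - φ.apply x‖
        = ‖(ω.apply (T.τ t x) - φ.apply (c * T.τ t x))
            + (φ.apply (c * T.τ t x) - φ.apply c * φ.apply x)
            + (φ.apply c * φ.apply x - φ.apply x)‖ := by congr 1; ring
      _ ≤ ‖(ω.apply (T.τ t x) - φ.apply (c * T.τ t x))
            + (φ.apply (c * T.τ t x) - φ.apply c * φ.apply x)‖
          + ‖φ.apply c * φ.apply x - φ.apply x‖ := norm_add_le _ _
      _ ≤ (‖ω.apply (T.τ t x) - φ.apply (c * T.τ t x)‖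
            + ‖φ.apply (c * T.τ t x) - φ.apply c * φ.apply x‖)
          + ‖φ.apply c * φ.apply x - φ.apply x‖ :=
          add_le_add_left (norm_add_le _ _) _
      _ ≤ (ε / 3 + ε / 3) + ε / 3 := add_le_add (add_le_add h1 h2) h3
      _ = ε := by ring
  · -- strong ergodicity implies the Kolmogorov property of the adjoint
    intro hSE x hx y hy
    have h00 : φ.apply (0 : Op H) = 0 := by simpa using φ.apply_smulOp 0 1
    rcases eq_or_ne y 0 with rfl | hy0
    · have hev : ∀ᶠ t in (atTop : Filter ℝ),
          φ.apply (A.tilde.τ t x * A.tilde.τ t 0) = φ.apply x * φ.apply (0 : Op H) := by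
        filter_upwards [Filter.eventually_ge_atTop (0 : ℝ)] with t ht
        rw [(A.tilde.linear t ht).map_zero, mul_zero, h00, mul_zero]
      exact Tendsto.congr' (hev.mono fun t h => h.symm) tendsto_const_nhds
    · set M : ℝ := ‖y‖ with hM
      have hMpos : 0 < M := norm_pos_iff.mpr hy0
      have hMC : ‖((M : ℝ) : ℂ)‖ = M := by
        rw [Complex.norm_real, Real.norm_eq_abs, abs_of_pos hMpos]
      rw [Metric.tendsto_atTop]
      intro ε hε
      set ε' : ℝ := ε / (2 * M) with hε'def
      have hε'pos : 0 < ε' := by positivity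
      set Ξ : K2 H := φ.vec with hΞdef
      set ζ : K2 H := diag (star x) Ξ with hζdef
      obtain ⟨T₀₀, hT₀₀0, he0⟩ := vec_estimate T φ hSE (Ξ + ζ) hε'pos
      obtain ⟨T₀₁, hT₀₁0, he1⟩ := vec_estimate T φ hSE (Ξ + Complex.I • ζ) hε'pos
      obtain ⟨T₀₂, hT₀₂0, he2⟩ := vec_estimate T φ hSE (Ξ - ζ) hε'pos
      obtain ⟨T₀₃, hT₀₃0, he3⟩ := vec_estimate T φ hSE (Ξ - Complex.I • ζ) hε'pos
      refine ⟨max (max T₀₀ T₀₁) (max T₀₂ T₀₃), ?_⟩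
      intro t ht
      have htA : T₀₀ ≤ t := le_trans (le_trans (le_max_left _ _) (le_max_left _ _)) ht
      have htB : T₀₁ ≤ t := le_trans (le_trans (le_max_right _ _) (le_max_left _ _)) ht
      have htC : T₀₂ ≤ t := le_trans (le_trans (le_max_left _ _) (le_max_right _ _)) ht
      have htD : T₀₃ ≤ t := le_trans (le_trans (le_max_right _ _) (le_max_right _ _)) ht
      have ht0 : (0 : ℝ) ≤ t := le_trans hT₀₀0 htA
      have hτy : A.tilde.τ t y ∈ S := A.tilde.maps t ht0 y hy
      set z : Op H := ((M : ℝ) : ℂ)⁻¹ • (A.tilde.τ t y) with hzdef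
      have hzS : z ∈ S := hS.smul_mem _ hτy
      have hzn : ‖z‖ ≤ 1 := by
        rw [hzdef, norm_smul, norm_inv, hMC]
        have hcontr : ‖A.tilde.τ t y‖ ≤ M :=
          cp_contract hone hS (A.tilde.unital t ht0) (A.tilde.cp t ht0)
            (A.tilde.normal t ht0) hy
        calc M⁻¹ * ‖A.tilde.τ t y‖ ≤ M⁻¹ * M := by gcongr
          _ = 1 := inv_mul_cancel₀ (ne_of_gt hMpos)
      have hφz : φ.apply z = ((M : ℝ) : ℂ)⁻¹ * φ.apply y := by
        rw [hzdef, φ.apply_smulOp, A.inv t ht0 y hy]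
      have hMne : ((M : ℝ) : ℂ) ≠ 0 := by
        exact_mod_cast ne_of_gt hMpos
      have hkey : φ.apply (A.tilde.τ t x * A.tilde.τ t y)
          = ((M : ℝ) : ℂ) * φ.apply (x * T.τ t z) := by
        rw [A.adjoint_rel t ht0 x hx _ hτy]
        have hτz : T.τ t (A.tilde.τ t y) = ((M : ℝ) : ℂ) • T.τ t z := by
          rw [hzdef, (T.linear t ht0).map_smul, smul_smul,
            mul_inv_cancel₀ hMne, one_smul]
        rw [hτz, mul_smul_comm, φ.apply_smulOp]
      have htarget : φ.apply x * φ.apply y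
          = ((M : ℝ) : ℂ) * (φ.apply x * φ.apply z) := by
        rw [hφz]
        field_simp
      have hxw : φ.apply (x * T.τ t z) = ⟪ζ, diag (T.τ t z) Ξ⟫ := by
        rw [φ.apply_mul]
      have hφx : φ.apply x = ⟪ζ, Ξ⟫ := by
        rw [hζdef, inner_diag_star_left]
        exact φ.apply_eq x
      -- estimates
      have b0 := he0 t htA z hzS hzn
      have b1 := he1 t htB z hzS hzn
      have b2 := he2 t htC z hzS hzn
      have b3 := he3 t htD z hzS hzn
      -- polarization
      have p1 := polarize (diag (T.τ t z)) Ξ ζ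
      have p2 := polarize (1 : Op (K2 H)) Ξ ζ
      simp only [ContinuousLinearMap.one_apply] at p2
      have hdiff : 4 * (φ.apply (x * T.τ t z) - φ.apply x * φ.apply z)
          = (⟪Ξ + ζ, diag (T.τ t z) (Ξ + ζ)⟫ - ⟪Ξ + ζ, Ξ + ζ⟫ * φ.apply z)
            + Complex.I * (⟪Ξ + Complex.I • ζ, diag (T.τ t z) (Ξ + Complex.I • ζ)⟫
              - ⟪Ξ + Complex.I • ζ, Ξ + Complex.I • ζ⟫ * φ.apply z)
            - (⟪Ξ - ζ, diag (T.τ t z) (Ξ - ζ)⟫ - ⟪Ξ - ζ, Ξ - ζ⟫ * φ.apply z)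
            - Complex.I * (⟪Ξ - Complex.I • ζ, diag (T.τ t z) (Ξ - Complex.I • ζ)⟫
              - ⟪Ξ - Complex.I • ζ, Ξ - Complex.I • ζ⟫ * φ.apply z) := by
        rw [hxw, hφx]
        linear_combination p1 - φ.apply z * p2
      have hquarter : ‖φ.apply (x * T.τ t z) - φ.apply x * φ.apply z‖ ≤ ε' := by
        have hb : ‖4 * (φ.apply (x * T.τ t z) - φ.apply x * φ.apply z)‖ ≤ 4 * ε' := by
          rw [hdiff]
          have hIn : ∀ w : ℂ, ‖Complex.I * w‖ = ‖w‖ := fun w => by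
            rw [norm_mul, Complex.norm_I, one_mul]
          calc ‖_ + _ - _ - _‖
              ≤ ‖_ + _ - _‖ + ‖Complex.I * (⟪Ξ - Complex.I • ζ,
                  diag (T.τ t z) (Ξ - Complex.I • ζ)⟫
                  - ⟪Ξ - Complex.I • ζ, Ξ - Complex.I • ζ⟫ * φ.apply z)‖ :=
                norm_sub_le _ _
            _ ≤ (‖_ + _‖ + ‖⟪Ξ - ζ, diag (T.τ t z) (Ξ - ζ)⟫
                  - ⟪Ξ - ζ, Ξ - ζ⟫ * φ.apply z‖)
                + ‖Complex.I * (⟪Ξ - Complex.I • ζ,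
                  diag (T.τ t z) (Ξ - Complex.I • ζ)⟫
                  - ⟪Ξ - Complex.I • ζ, Ξ - Complex.I • ζ⟫ * φ.apply z)‖ :=
                add_le_add_left (norm_sub_le _ _) _
            _ ≤ ((‖⟪Ξ + ζ, diag (T.τ t z) (Ξ + ζ)⟫ - ⟪Ξ + ζ, Ξ + ζ⟫ * φ.apply z‖
                  + ‖Complex.I * (⟪Ξ + Complex.I • ζ,
                    diag (T.τ t z) (Ξ + Complex.I • ζ)⟫
                    - ⟪Ξ + Complex.I • ζ, Ξ + Complex.I • ζ⟫ * φ.apply z)‖)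
                + ‖⟪Ξ - ζ, diag (T.τ t z) (Ξ - ζ)⟫ - ⟪Ξ - ζ, Ξ - ζ⟫ * φ.apply z‖)
                + ‖Complex.I * (⟪Ξ - Complex.I • ζ,
                  diag (T.τ t z) (Ξ - Complex.I • ζ)⟫
                  - ⟪Ξ - Complex.I • ζ, Ξ - Complex.I • ζ⟫ * φ.apply z)‖ := by
                gcongr
                exact norm_add_le _ _
            _ ≤ ((ε' + ε') + ε') + ε' := by
                rw [hIn, hIn]
                exact add_le_add (add_le_add (add_le_add b0 b1) b2) b3
            _ = 4 * ε' := by ring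
        have h4 : ‖4 * (φ.apply (x * T.τ t z) - φ.apply x * φ.apply z)‖
            = 4 * ‖φ.apply (x * T.τ t z) - φ.apply x * φ.apply z‖ := by
          rw [norm_mul]
          norm_num
        rw [h4] at hb
        linarith
      rw [dist_eq_norm, hkey, htarget, ← mul_sub, norm_mul, hMC]
      calc M * ‖φ.apply (x * T.τ t z) - φ.apply x * φ.apply z‖ ≤ M * ε' := by gcongr
        _ = ε / 2 := by
            rw [hε'def]
            field_simp
        _ < ε := by linarith


end Paper
end
end
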